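/- arXiv:1902.10857 — 8 statements merged into one kernel-verified Lean document; each statement's English description precedes it below -/
import Mathlib

section
/- Every seminormalized weakly null sequence in an infinite-dimensional Banach space admits a subsequence that is an asymptotically monotone basic sequence, i.e., a basic subsequence whose partial-sum projections P_n satisfy ‖P_n‖ → 1. -/
/-!
Mazur's construction. If `F` is finite-dimensional and `δ > 0`, finitely many functionals of
norm at most one norm `F` up to the factor `1 - δ`. A weakly null sequence is eventually almost
annihilated by these functionals, which bounds `‖x + a • y n‖` from below by `(1 - 3δ) ‖x‖` for
`x ∈ F` and small `|a|`; for large `|a|` the bound follows from `‖y n‖ ≥ A` and the triangle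
inequality. Choosing the subsequence recursively, with `F` the span of the terms chosen so far
and `1 - 3δ = b (k + 1) / b k` for `b k = 1 + 2⁻ᵏ`, makes `‖∑ i < n, a i • y (φ i)‖ / b n`
nondecreasing in `n`; hence the `k`-th partial-sum projection has norm at most `b k → 1`.
-/

open Filter Topology Finset

theorem exists_strictMono_forall_image_range {P : ℕ → Finset ℕ → ℕ → Prop}
    (h : ∀ k s, ∃ᶠ n in atTop, P k s n) :
    ∃ φ : ℕ → ℕ, StrictMono φ ∧ ∀ k, P k ((range k).image φ) (φ k) := by
  have : ∀ k s, ∃ n, s.sup id < n ∧ P k s n := fun k s =>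
    ((h k s).and_eventually (eventually_gt_atTop _)).exists.imp fun _ hn => hn.symm
  choose next hnext_gt hnext using this
  let chosen : ℕ → Finset ℕ := fun k => Nat.rec ∅ (fun k s => insert (next k s) s) k
  have hchosen : ∀ k, chosen k = (range k).image fun j => next j (chosen j) := by
    intro k
    induction k with
    | zero => rfl
    | succ k ih => rw [range_add_one, image_insert, ← ih]
  refine ⟨fun k => next k (chosen k), strictMono_nat_of_lt_succ fun k => ?_, fun k => ?_⟩
  · exact (le_sup (f := id) (mem_insert_self _ _)).trans_lt (hnext_gt (k + 1) (chosen (k + 1)))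
  · rw [← hchosen]
    exact hnext k _

section

variable {X : Type*} [NormedAddCommGroup X] [NormedSpace ℝ X]

theorem exists_finset_almost_norming (F : Submodule ℝ X) [FiniteDimensional ℝ F] {δ : ℝ}
    (hδ : 0 < δ) :
    ∃ G : Finset (StrongDual ℝ X), (∀ g ∈ G, ‖g‖ ≤ 1) ∧ ∀ x ∈ F, ∃ g ∈ G, (1 - δ) * ‖x‖ ≤ g x := by
  classical
  choose g hg_norm hg_self using fun z : X => exists_dual_vector'' ℝ z
  simp only [RCLike.ofReal_real_eq_id, id] at hg_self
  obtain ⟨t, ht_sphere, ht_cover⟩ :=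
    ((isCompact_sphere (0 : F) 1).image continuous_subtype_val).elim_nhds_subcover
      (fun z => Metric.ball z δ) fun z _ => Metric.ball_mem_nhds z hδ
  refine ⟨insert 0 (t.image g), ?_, fun x hx => ?_⟩
  · simpa [forall_mem_insert] using fun z _ => hg_norm z
  rcases eq_or_ne x 0 with rfl | hx0
  · exact ⟨0, mem_insert_self _ _, by simp⟩
  have hx_pos : 0 < ‖x‖ := norm_pos_iff.2 hx0
  set u := ‖x‖⁻¹ • x
  have hu : u ∈ Subtype.val '' Metric.sphere (0 : F) 1 :=
    ⟨⟨u, F.smul_mem _ hx⟩, by simp [u, norm_smul, hx_pos.ne'], rfl⟩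
  obtain ⟨z, hzt, hzu⟩ := Set.mem_iUnion₂.1 (ht_cover hu)
  obtain ⟨w, hw, rfl⟩ := ht_sphere z hzt
  have hz : ‖(w : X)‖ = 1 := by simpa using hw
  refine ⟨g w, mem_insert_of_mem (mem_image_of_mem _ hzt), ?_⟩
  have hgu : 1 - δ ≤ g w u := by
    have h_near : |g w (u - w)| ≤ δ :=
      ((g w).le_of_opNorm_le (hg_norm w) _).trans
        (by simpa [dist_eq_norm] using (Metric.mem_ball.1 hzu).le)
    have : g w u = g w w + g w (u - w) := by rw [← map_add, add_sub_cancel]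
    rw [this, hg_self, hz]
    linarith [neg_abs_le (g w (u - w))]
  calc (1 - δ) * ‖x‖ ≤ ‖x‖ * g w u := by rw [mul_comm]; gcongr
    _ = g w x := by simp [u, hx_pos.ne']

theorem mul_norm_le_norm_add_smul {g : StrongDual ℝ X} {x y : X} {A δ : ℝ} (hA : 0 < A)
    (hy : A ≤ ‖y‖) (hg : ‖g‖ ≤ 1) (hgx : (1 - δ) * ‖x‖ ≤ g x) (hgy : |g y| ≤ δ * A) (a : ℝ) :
    (1 - 3 * δ) * ‖x‖ ≤ ‖x + a • y‖ := by
  have hδ : 0 ≤ δ := nonneg_of_mul_nonneg_left ((abs_nonneg _).trans hgy) hA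
  have hδx : 0 ≤ δ * ‖x‖ := mul_nonneg hδ (norm_nonneg x)
  rcases le_or_gt (|a| * A) (2 * ‖x‖) with ha | ha
  · have hay : -(δ * (2 * ‖x‖)) ≤ a * g y := by
      have : |a * g y| ≤ δ * (2 * ‖x‖) := by
        rw [abs_mul]
        nlinarith [abs_nonneg a, abs_nonneg (g y)]
      exact neg_le_of_abs_le this
    calc (1 - 3 * δ) * ‖x‖ ≤ g x + a * g y := by linarith
      _ = g (x + a • y) := by simp
      _ ≤ ‖x + a • y‖ := (le_abs_self _).trans (by simpa using g.le_of_opNorm_le hg (x + a • y))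
  · calc (1 - 3 * δ) * ‖x‖ ≤ |a| * A - ‖x‖ := by linarith
      _ ≤ ‖a • y‖ - ‖-x‖ := by
        rw [norm_smul, norm_neg, Real.norm_eq_abs]
        gcongr
      _ ≤ ‖x + a • y‖ := by simpa [add_comm] using norm_sub_norm_le (a • y) (-x)

variable {y : ℕ → X} {A : ℝ}

theorem eventually_mul_norm_le_norm_add_smul (hA : 0 < A) (hy : ∀ n, A ≤ ‖y n‖)
    (hweak : ∀ f : StrongDual ℝ X, Tendsto (fun n => f (y n)) atTop (𝓝 0))
    (F : Submodule ℝ X) [FiniteDimensional ℝ F] {c : ℝ} (hc : c < 1) :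
    ∀ᶠ n in atTop, ∀ x ∈ F, ∀ a : ℝ, c * ‖x‖ ≤ ‖x + a • y n‖ := by
  set δ := (1 - c) / 3
  have hδ : 0 < δ := by simp only [δ]; linarith
  obtain ⟨G, hG_norm, hG⟩ := exists_finset_almost_norming F hδ
  have hsmall : ∀ᶠ n in atTop, ∀ g ∈ G, |g (y n)| ≤ δ * A := by
    have hδA : 0 < δ * A := mul_pos hδ hA
    refine (eventually_all_finset G).2 fun g _ => ?_
    filter_upwards [hweak g (Icc_mem_nhds (neg_lt_zero.2 hδA) hδA)] with n hn
    exact abs_le.2 hn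
  filter_upwards [hsmall] with n hn x hx a
  obtain ⟨g, hgG, hgx⟩ := hG x hx
  have hc_eq : c = 1 - 3 * δ := by simp only [δ]; ring
  rw [hc_eq]
  exact mul_norm_le_norm_add_smul hA (hy n) (hG_norm g hgG) hgx (hn g hgG) a

theorem exists_strictMono_monotone_norm_sum_div (hA : 0 < A) (hy : ∀ n, A ≤ ‖y n‖)
    (hweak : ∀ f : StrongDual ℝ X, Tendsto (fun n => f (y n)) atTop (𝓝 0))
    {b : ℕ → ℝ} (hb : StrictAnti b) (hb_pos : ∀ n, 0 < b n) :
    ∃ φ : ℕ → ℕ, StrictMono φ ∧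
      ∀ a : ℕ → ℝ, Monotone fun n => ‖∑ i ∈ range n, a i • y (φ i)‖ / b n := by
  classical
  obtain ⟨φ, hφ, hP⟩ := exists_strictMono_forall_image_range
    (P := fun k s n => ∀ x ∈ Submodule.span ℝ ((s.image y : Finset X) : Set X), ∀ a : ℝ,
      b (k + 1) / b k * ‖x‖ ≤ ‖x + a • y n‖)
    fun k s => (eventually_mul_norm_le_norm_add_smul hA hy hweak _
      ((div_lt_one (hb_pos k)).2 (hb k.lt_succ_self))).frequently
  refine ⟨φ, hφ, fun a => monotone_nat_of_le_succ fun k => ?_⟩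
  have hmem : ∑ i ∈ range k, a i • y (φ i) ∈
      Submodule.span ℝ ((((range k).image φ).image y : Finset X) : Set X) :=
    Submodule.sum_mem _ fun i hi => Submodule.smul_mem _ _
      (Submodule.subset_span (by simpa using ⟨i, mem_range.1 hi, rfl⟩))
  have hstep := hP k _ hmem (a k)
  rw [← sum_range_succ] at hstep
  rw [div_le_div_iff₀ (hb_pos k) (hb_pos (k + 1))]
  calc ‖∑ i ∈ range k, a i • y (φ i)‖ * b (k + 1)
      = b k * (b (k + 1) / b k * ‖∑ i ∈ range k, a i • y (φ i)‖) := by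
        field_simp [(hb_pos k).ne']
    _ ≤ b k * ‖∑ i ∈ range (k + 1), a i • y (φ i)‖ :=
        mul_le_mul_of_nonneg_left hstep (hb_pos k).le
    _ = _ := mul_comm _ _

end

theorem seminormalized_weakly_null_asymptotically_monotone_subseq_general
    {X : Type*} [NormedAddCommGroup X] [NormedSpace ℝ X]
    (y : ℕ → X) (A B : ℝ) (hA : 0 < A)
    (hbd : ∀ n, A ≤ ‖y n‖ ∧ ‖y n‖ ≤ B)
    (hweak : ∀ f : X →L[ℝ] ℝ, Tendsto (fun n => f (y n)) atTop (𝓝 0)) :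
    ∃ φ : ℕ → ℕ, StrictMono φ ∧ ∃ C : ℕ → ℝ,
      (∀ k n, k ≤ n → ∀ a : ℕ → ℝ,
        ‖∑ i ∈ Finset.range k, a i • y (φ i)‖ ≤
          C k * ‖∑ i ∈ Finset.range n, a i • y (φ i)‖) ∧
      Tendsto C atTop (𝓝 1) := by
  set b : ℕ → ℝ := fun k => 1 + (1 / 2) ^ k
  have hb_one : ∀ n, 1 ≤ b n := fun n => le_add_of_nonneg_right (by positivity)
  obtain ⟨φ, hφ, hmono⟩ := exists_strictMono_monotone_norm_sum_div hA (fun n => (hbd n).1) hweak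
    ((pow_right_strictAnti₀ (by norm_num) (by norm_num)).const_add 1)
    fun n => zero_lt_one.trans_le (hb_one n)
  refine ⟨φ, hφ, b, fun k n hkn a => ?_, ?_⟩
  · rw [mul_comm, ← div_le_iff₀ (zero_lt_one.trans_le (hb_one k))]
    exact (hmono a hkn).trans (div_le_self (norm_nonneg _) (hb_one n))
  · convert (tendsto_pow_atTop_nhds_zero_of_lt_one (by norm_num : (0 : ℝ) ≤ 1 / 2)
      (by norm_num)).const_add 1
    rw [add_zero]

/-- Every seminormalized weakly null sequence in an infinite-dimensional
Banach space admits a subsequence that is an asymptotically monotone basic sequence: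
there are constants `C k` bounding the partial-sum projections, with `C k → 1`. -/
theorem seminormalized_weakly_null_asymptotically_monotone_subseq
    {X : Type*} [NormedAddCommGroup X] [NormedSpace ℝ X] [CompleteSpace X]
    (hinf : ¬ FiniteDimensional ℝ X)
    (y : ℕ → X) (A B : ℝ) (hA : 0 < A)
    (hbd : ∀ n, A ≤ ‖y n‖ ∧ ‖y n‖ ≤ B)
    (hweak : ∀ f : X →L[ℝ] ℝ, Tendsto (fun n => f (y n)) atTop (𝓝 0)) :
    ∃ φ : ℕ → ℕ, StrictMono φ ∧ ∃ C : ℕ → ℝ,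
      (∀ k n, k ≤ n → ∀ a : ℕ → ℝ,
        ‖∑ i ∈ Finset.range k, a i • y (φ i)‖ ≤
          C k * ‖∑ i ∈ Finset.range n, a i • y (φ i)‖) ∧
      Tendsto C atTop (𝓝 1) :=
  seminormalized_weakly_null_asymptotically_monotone_subseq_general y A B hA hbd hweak
end

section
/- Let X be a Banach space with a subspace Y carrying a biorthogonal system {x_i; f_i}_{i=1}^∞ (with f_i ∈ Y*) such that, for some ε ∈ (0,1), ‖x_i‖ ≤ 1 + ε for all i and sup_{i≠j}(|f_i(y)| + |f_j(y)|) ≤ (1 + ε)‖y‖ for all y ∈ Y. Then X admits an equivalent norm |||·||| with (1+ε)^{-2}‖x‖ ≤ |||x||| ≤ (1+ε)‖x‖ for all x ∈ X, whose unit sphere contains a sequence (u_n) with ‖u_n ± u_m‖ ≥ 2 (in the new norm) for all n ≠ m. -/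
/-!
The functionals `f i + σ • f j` (`i ≠ j`, `|σ| ≤ 1`) have norm at most `1 + ε` on `Y`.
Hahn–Banach extends them to `X` with the same norms, and the supremum `S` of the moduli of the
extensions is a seminorm with `S ≤ (1 + ε) ‖·‖`. On each `x n` these functionals have modulus at
most `1`, attained by `f n + f (n + 1)`, while `f n ± f m` takes the value `2` at `x n ± x m`.
The new norm is `max ((1 + ε)⁻² ‖·‖) S`; the bound `‖x n‖ ≤ 1 + ε` keeps its first term at
most `1` on `x n`.
-/

open scoped NNReal

theorem exists_seminorm_le_and_isLUB_norm_apply {𝕜 E : Type*} [RCLike 𝕜]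
    [NormedAddCommGroup E] [NormedSpace 𝕜 E] (Y : Submodule 𝕜 E)
    (s : Set (StrongDual 𝕜 Y)) (hs : s.Nonempty) {C : ℝ} (hC : ∀ φ ∈ s, ‖φ‖ ≤ C) :
    ∃ S : Seminorm 𝕜 E, (∀ z, S z ≤ C * ‖z‖) ∧
      ∀ y : Y, IsLUB ((fun φ : StrongDual 𝕜 Y => ‖φ y‖) '' s) (S y) := by
  have : Nonempty s := hs.to_subtype
  choose g hg_ext hg_norm using fun φ : s => exists_extension_norm_eq Y (φ : StrongDual 𝕜 Y)
  have hg_le : ∀ φ z, ‖g φ z‖ ≤ C * ‖z‖ := fun φ z =>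
    (g φ).le_of_opNorm_le ((hg_norm φ).trans_le (hC φ φ.2)) z
  have hbdd : BddAbove (Set.range fun φ => (g φ : E →ₗ[𝕜] 𝕜).toSeminorm) :=
    Seminorm.bddAbove_range_iff.2 fun z => ⟨C * ‖z‖, by rintro _ ⟨φ, rfl⟩; exact hg_le φ z⟩
  have hS : ∀ z, (⨆ φ, (g φ : E →ₗ[𝕜] 𝕜).toSeminorm) z = ⨆ φ, ‖g φ z‖ := fun z =>
    Seminorm.iSup_apply hbdd
  refine ⟨⨆ φ, (g φ : E →ₗ[𝕜] 𝕜).toSeminorm, fun z => ?_, fun y => ?_⟩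
  · rw [hS]
    exact ciSup_le fun φ => hg_le φ z
  · rw [hS, Set.image_eq_range]
    simp only [hg_ext]
    exact isLUB_ciSup ⟨C * ‖(y : E)‖, by
      rintro _ ⟨φ, rfl⟩
      simpa only [hg_ext] using hg_le φ y⟩

def signedPairSums {M : Type*} [AddCommGroup M] [Module ℝ M] (f : ℕ → M) : Set M :=
  {φ | ∃ i j, i ≠ j ∧ ∃ σ : ℝ, |σ| ≤ 1 ∧ φ = f i + σ • f j}

theorem add_smul_mem_signedPairSums {M : Type*} [AddCommGroup M] [Module ℝ M] (f : ℕ → M)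
    {i j : ℕ} (hij : i ≠ j) {σ : ℝ} (hσ : |σ| ≤ 1) : f i + σ • f j ∈ signedPairSums f :=
  ⟨i, j, hij, σ, hσ, rfl⟩

section SignedPairSums

variable {Y : Type*} [NormedAddCommGroup Y] [NormedSpace ℝ Y] {f : ℕ → StrongDual ℝ Y}
  {φ : StrongDual ℝ Y}

theorem norm_le_of_mem_signedPairSums {C : ℝ} (hC : 0 ≤ C)
    (hf : ∀ i j, i ≠ j → ∀ y : Y, |f i y| + |f j y| ≤ C * ‖y‖) (hφ : φ ∈ signedPairSums f) :
    ‖φ‖ ≤ C := by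
  obtain ⟨i, j, hij, σ, hσ, rfl⟩ := hφ
  refine ContinuousLinearMap.opNorm_le_bound _ hC fun y => ?_
  calc ‖f i y + σ * f j y‖ ≤ |f i y| + |σ| * |f j y| := by
        rw [Real.norm_eq_abs, ← abs_mul]; exact abs_add_le _ _
    _ ≤ |f i y| + |f j y| := by gcongr; exact mul_le_of_le_one_left (abs_nonneg _) hσ
    _ ≤ C * ‖y‖ := hf i j hij y

theorem abs_apply_le_one_of_mem_signedPairSums {x : ℕ → Y}
    (hbi : ∀ i j, f i (x j) = if i = j then 1 else 0) (hφ : φ ∈ signedPairSums f) (n : ℕ) :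
    |φ (x n)| ≤ 1 := by
  obtain ⟨i, j, hij, σ, hσ, rfl⟩ := hφ
  by_cases hi : i = n
  · subst hi
    simp [hbi, Ne.symm hij]
  · by_cases hj : j = n <;> simp [hbi, hi, hj, hσ]

end SignedPairSums

theorem biorthogonal_renorming_symmetrically_two_separated_general
    {X : Type*} [NormedAddCommGroup X] [NormedSpace ℝ X]
    (Y : Submodule ℝ X) (x : ℕ → Y) (f : ℕ → Y →L[ℝ] ℝ)
    (hbi : ∀ i j, f i (x j) = if i = j then 1 else 0)
    (ε : ℝ) (hε : ε ∈ Set.Ioo (0 : ℝ) 1)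
    (hx : ∀ i, ‖(x i : X)‖ ≤ 1 + ε)
    (hf : ∀ i j, i ≠ j → ∀ y : Y, |f i y| + |f j y| ≤ (1 + ε) * ‖y‖) :
    ∃ N : Seminorm ℝ X,
      (∀ z : X, ((1 + ε) ^ 2)⁻¹ * ‖z‖ ≤ N z ∧ N z ≤ (1 + ε) * ‖z‖) ∧
      ∃ u : ℕ → X, (∀ n, N (u n) = 1) ∧
        ∀ n m, n ≠ m → 2 ≤ N (u n + u m) ∧ 2 ≤ N (u n - u m) := by
  obtain ⟨hε0, -⟩ := hε
  obtain ⟨S, hS_le, hS_lub⟩ := exists_seminorm_le_and_isLUB_norm_apply Y (signedPairSums f)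
    ⟨_, add_smul_mem_signedPairSums f zero_ne_one (σ := 1) (by norm_num)⟩
    fun φ hφ => norm_le_of_mem_signedPairSums (by linarith) hf hφ
  have hS_ge : ∀ φ ∈ signedPairSums f, ∀ y : Y, |φ y| ≤ S y := fun φ hφ y =>
    (hS_lub y).1 (Set.mem_image_of_mem _ hφ)
  have hS_x : ∀ n, S (x n) = 1 := by
    intro n
    refine le_antisymm ((isLUB_le_iff (hS_lub (x n))).2 ?_) ?_
    · exact Set.forall_mem_image.2 fun φ hφ => abs_apply_le_one_of_mem_signedPairSums hbi hφ n
    · simpa [hbi] using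
        hS_ge _ (add_smul_mem_signedPairSums f (Nat.lt_add_one n).ne (σ := 1) (by norm_num)) (x n)
  have hc_le : ((1 + ε) ^ 2)⁻¹ ≤ 1 := inv_le_one_of_one_le₀ (by nlinarith)
  have hc_mul_le : ((1 + ε) ^ 2)⁻¹ * (1 + ε) ≤ 1 := by
    rw [inv_mul_le_iff₀ (by positivity)]; nlinarith
  let c : ℝ≥0 := ⟨((1 + ε) ^ 2)⁻¹, by positivity⟩
  have hN : ∀ z, (c • normSeminorm ℝ X ⊔ S) z = max (((1 + ε) ^ 2)⁻¹ * ‖z‖) (S z) := fun z =>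
    rfl
  refine ⟨c • normSeminorm ℝ X ⊔ S, fun z => ⟨?_, ?_⟩, fun n => x n, fun n => ?_,
    fun n m hnm => ⟨?_, ?_⟩⟩ <;> simp only [hN]
  · exact le_max_left _ _
  · exact max_le (by gcongr; linarith) (hS_le z)
  · rw [hS_x]
    exact max_eq_right ((mul_le_mul_of_nonneg_left (hx n) (by positivity)).trans hc_mul_le)
  · refine le_max_of_le_right ?_
    simpa [hbi, hnm, Ne.symm hnm, one_add_one_eq_two] using
      hS_ge _ (add_smul_mem_signedPairSums f hnm (σ := 1) (by norm_num)) (x n + x m)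
  · refine le_max_of_le_right ?_
    simpa [hbi, hnm, Ne.symm hnm, one_add_one_eq_two] using
      hS_ge _ (add_smul_mem_signedPairSums f hnm (σ := -1) (by norm_num)) (x n - x m)

/-- A biorthogonal system `{x_i; f_i}` on a subspace `Y` with
`‖x_i‖ ≤ 1 + ε` and `|f_i(y)| + |f_j(y)| ≤ (1+ε)‖y‖` (for `i ≠ j`) yields an equivalent
norm `N` on `X` with `(1+ε)⁻² ‖z‖ ≤ N z ≤ (1+ε) ‖z‖` whose unit sphere contains a
symmetrically 2-separated sequence. -/
theorem biorthogonal_renorming_symmetrically_two_separated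
    {X : Type*} [NormedAddCommGroup X] [NormedSpace ℝ X] [CompleteSpace X]
    (Y : Submodule ℝ X) (x : ℕ → Y) (f : ℕ → Y →L[ℝ] ℝ)
    (hbi : ∀ i j, f i (x j) = if i = j then 1 else 0)
    (ε : ℝ) (hε : ε ∈ Set.Ioo (0 : ℝ) 1)
    (hx : ∀ i, ‖(x i : X)‖ ≤ 1 + ε)
    (hf : ∀ i j, i ≠ j → ∀ y : Y, |f i y| + |f j y| ≤ (1 + ε) * ‖y‖) :
    ∃ N : Seminorm ℝ X,
      (∀ z : X, ((1 + ε) ^ 2)⁻¹ * ‖z‖ ≤ N z ∧ N z ≤ (1 + ε) * ‖z‖) ∧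
      ∃ u : ℕ → X, (∀ n, N (u n) = 1) ∧
        ∀ n m, n ≠ m → 2 ≤ N (u n + u m) ∧ 2 ≤ N (u n - u m) :=
  biorthogonal_renorming_symmetrically_two_separated_general Y x f hbi ε hε hx hf
end

section
/- Let X be a Banach space containing a subspace isomorphic to ℓ¹. Then for every ε ∈ (0,1) there is an equivalent norm |||·||| on X with (1+ε)^{-2}‖x‖ ≤ |||x||| ≤ (1+ε)‖x‖ for all x, such that the unit sphere of (X, |||·|||) contains a normalized bimonotone basic sequence (x_i) which is symmetrically 2-separated: |||x_i ± x_j||| ≥ 2 for all i ≠ j. -/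
/-!
Take `K = 1 + ε`. James's distortion argument: if `A` embeds finitely supported `ℓ¹` sequences
isomorphically, the infima `c n` of `‖A a‖` over `ℓ¹`-unit vectors `a` supported in `[n, ∞)` have
a supremum `C > 0`. Fix `n₀` with `C < K * c n₀`. Since `c n ≤ C`, beyond every `n` there is an
`ℓ¹`-unit vector whose image has norm `< K * c n₀`; disjointly supported such blocks beyond `n₀`
normalize to a unit sequence `(u i)` with `∑ |b i| ≤ K * ‖∑ b i • u i‖`, because
`c n₀ * ‖a‖₁ ≤ ‖A a‖` for every `a` supported beyond `n₀`.

For such a sequence the seminorm `N z = sup |g z|`, over functionals with `‖g‖ ≤ K` and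
`|g (u i)| ≤ 1`, satisfies `‖z‖ ≤ N z ≤ K * ‖z‖`, and Hahn–Banach extensions of sign functionals
from the span of `(u i)` show that `N` is exactly the `ℓ¹` norm of the coefficients there.
Bimonotonicity and symmetric `2`-separation follow at once.
-/

open Filter Topology

instance : Fact ((1 : ENNReal) ≤ 1) := ⟨le_rfl⟩

open Function

section L1Norm

variable {ι : Type*}

noncomputable def l1Norm (a : ι →₀ ℝ) : ℝ := a.sum fun _ x => |x|

theorem l1Norm_eq_sum {a : ι →₀ ℝ} {s : Finset ι} (hs : a.support ⊆ s) :
    l1Norm a = ∑ i ∈ s, |a i| :=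
  Finsupp.sum_of_support_subset a hs _ fun _ _ => abs_zero

theorem l1Norm_pos {a : ι →₀ ℝ} (ha : a ≠ 0) : 0 < l1Norm a := by
  rw [l1Norm_eq_sum subset_rfl]
  exact Finset.sum_pos (fun i hi => abs_pos.2 (Finsupp.mem_support_iff.1 hi))
    (Finsupp.support_nonempty_iff.2 ha)

theorem l1Norm_smul (c : ℝ) (a : ι →₀ ℝ) : l1Norm (c • a) = |c| * l1Norm a := by
  rw [l1Norm_eq_sum Finsupp.support_smul, l1Norm_eq_sum subset_rfl, Finset.mul_sum]
  simp [abs_mul]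

theorem l1Norm_single (i : ι) (c : ℝ) : l1Norm (Finsupp.single i c) = |c| := by
  simp [l1Norm]

theorem l1Norm_add_of_disjoint [DecidableEq ι] {a b : ι →₀ ℝ}
    (h : Disjoint a.support b.support) : l1Norm (a + b) = l1Norm a + l1Norm b := by
  rw [l1Norm_eq_sum (Finsupp.support_add_eq h).subset, Finset.sum_union h,
    l1Norm_eq_sum subset_rfl, l1Norm_eq_sum subset_rfl]
  congr 1
  · refine Finset.sum_congr rfl fun i hi => ?_
    simp [Finsupp.notMem_support_iff.1 (Finset.disjoint_left.1 h hi)]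
  · refine Finset.sum_congr rfl fun i hi => ?_
    simp [Finsupp.notMem_support_iff.1 (Finset.disjoint_right.1 h hi)]

theorem l1Norm_sum_of_pairwise_disjoint {κ : Type*} (w : κ → ι →₀ ℝ)
    (hw : Pairwise (Disjoint on fun j => (w j).support)) (t : Finset κ) :
    l1Norm (∑ j ∈ t, w j) = ∑ j ∈ t, l1Norm (w j) := by
  classical
  induction t using Finset.cons_induction with
  | empty => simp [l1Norm]
  | cons j t hj ih =>
    rw [Finset.sum_cons, Finset.sum_cons, ← ih]
    refine l1Norm_add_of_disjoint (Finset.disjoint_left.2 fun i hij hit => ?_)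
    obtain ⟨k, hk, hik⟩ := Finset.mem_biUnion.1 (Finsupp.support_finsetSum hit)
    exact Finset.disjoint_left.1 (hw (ne_of_mem_of_not_mem hk hj).symm) hij hik

end L1Norm

noncomputable def finsuppToL1 : (ℕ →₀ ℝ) →ₗ[ℝ] lp (fun _ : ℕ => ℝ) 1 :=
  Finsupp.linearCombination ℝ fun i => lp.single 1 i 1

theorem norm_finsuppToL1 (a : ℕ →₀ ℝ) : ‖finsuppToL1 a‖ = l1Norm a := by
  have h := lp.norm_sum_single (p := 1) (E := fun _ : ℕ => ℝ) (by norm_num) a a.support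
  simp only [ENNReal.toReal_one, Real.rpow_one, Real.norm_eq_abs] at h
  rw [finsuppToL1, Finsupp.linearCombination_apply, Finsupp.sum, l1Norm_eq_sum subset_rfl, ← h]
  congr 1
  refine Finset.sum_congr rfl fun i _ => ?_
  rw [← lp.single_smul, smul_eq_mul, mul_one]

theorem exists_l1Norm_bounds_of_equiv {X : Type*} [NormedAddCommGroup X] [NormedSpace ℝ X]
    (Y : Submodule ℝ X) (e : lp (fun _ : ℕ => ℝ) 1 ≃L[ℝ] Y) :
    ∃ (A : (ℕ →₀ ℝ) →ₗ[ℝ] X) (m M : ℝ), 0 < m ∧ (∀ a, m * l1Norm a ≤ ‖A a‖) ∧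
      ∀ a, ‖A a‖ ≤ M * l1Norm a := by
  let T : lp (fun _ : ℕ => ℝ) 1 →L[ℝ] Y := e
  let T' : Y →L[ℝ] lp (fun _ : ℕ => ℝ) 1 := e.symm
  refine ⟨Y.subtype ∘ₗ T.toLinearMap ∘ₗ finsuppToL1, (‖T'‖ + 1)⁻¹, ‖T‖, by positivity,
    fun a => ?_, fun a => ?_⟩ <;> rw [← norm_finsuppToL1]
  · rw [inv_mul_le_iff₀ (by positivity)]
    calc ‖finsuppToL1 a‖ = ‖T' (T (finsuppToL1 a))‖ := by simp [T, T']
      _ ≤ ‖T'‖ * ‖T (finsuppToL1 a)‖ := T'.le_opNorm _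
      _ ≤ (‖T'‖ + 1) * ‖T (finsuppToL1 a)‖ := by gcongr; linarith
  · exact T.le_opNorm _

theorem exists_pairwise_disjoint_comp (s : ℕ → Finset ℕ) (hs : ∀ n, ∀ i ∈ s n, n ≤ i)
    (n₀ : ℕ) : ∃ ν : ℕ → ℕ, (∀ j, n₀ ≤ ν j) ∧ Pairwise (Disjoint on fun j => s (ν j)) := by
  let next : ℕ → ℕ := fun n => n + (s n).sup id + 1
  let ν : ℕ → ℕ := fun j => next^[j] n₀
  have hsucc : ∀ j, ν (j + 1) = ν j + (s (ν j)).sup id + 1 := fun j =>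
    Function.iterate_succ_apply' next j n₀
  have hν : Monotone ν := monotone_nat_of_le_succ fun j => by have := hsucc j; omega
  have hlt : ∀ j, ∀ i ∈ s (ν j), i < ν (j + 1) := fun j i hi => by
    have : i ≤ (s (ν j)).sup id := Finset.le_sup (f := id) hi
    have := hsucc j
    omega
  have hdisj : ∀ j k, j < k → Disjoint (s (ν j)) (s (ν k)) := fun j k hjk =>
    Finset.disjoint_left.2 fun i hij hik =>
      (hlt j i hij).not_ge ((hν hjk).trans (hs _ i hik))
  refine ⟨ν, fun j => hν (Nat.zero_le j), fun j k hjk => ?_⟩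
  rcases hjk.lt_or_gt with h | h
  exacts [hdisj j k h, (hdisj k j h).symm]

def tailUnitSphere (n : ℕ) : Set (ℕ →₀ ℝ) :=
  {a | a ∈ Finsupp.supported ℝ ℝ (Set.Ici n) ∧ l1Norm a = 1}

theorem single_mem_tailUnitSphere (n : ℕ) : Finsupp.single n 1 ∈ tailUnitSphere n :=
  ⟨Finsupp.single_mem_supported ℝ (1 : ℝ) (Set.mem_Ici.2 le_rfl), by simp [l1Norm_single]⟩

instance (n : ℕ) : Nonempty (tailUnitSphere n) :=
  ⟨⟨_, single_mem_tailUnitSphere n⟩⟩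

section James

variable {X : Type*} [NormedAddCommGroup X] [NormedSpace ℝ X] (A : (ℕ →₀ ℝ) →ₗ[ℝ] X)

noncomputable def tailInf (n : ℕ) : ℝ :=
  ⨅ a : tailUnitSphere n, ‖A a‖

theorem tailInf_le_norm {n : ℕ} {a : ℕ →₀ ℝ} (ha : a ∈ tailUnitSphere n) :
    tailInf A n ≤ ‖A a‖ := by
  refine ciInf_le ?_ (⟨a, ha⟩ : tailUnitSphere n)
  exact ⟨0, Set.forall_mem_range.2 fun _ => norm_nonneg _⟩

theorem tailInf_mul_l1Norm_le {n : ℕ} {a : ℕ →₀ ℝ}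
    (ha : a ∈ Finsupp.supported ℝ ℝ (Set.Ici n)) : tailInf A n * l1Norm a ≤ ‖A a‖ := by
  rcases eq_or_ne a 0 with rfl | ha0
  · simp [l1Norm]
  have hpos := l1Norm_pos ha0
  have h := tailInf_le_norm A ⟨Submodule.smul_mem _ (l1Norm a)⁻¹ ha,
    by rw [l1Norm_smul, abs_inv, abs_of_pos hpos, inv_mul_cancel₀ hpos.ne']⟩
  rwa [map_smul, norm_smul, norm_inv, Real.norm_of_nonneg hpos.le, ← div_eq_inv_mul,
    le_div_iff₀ hpos] at h

theorem le_tailInf {m : ℝ} (hA : ∀ a, m * l1Norm a ≤ ‖A a‖) (n : ℕ) : m ≤ tailInf A n :=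
  le_ciInf fun a => by simpa [a.2.2] using hA a

theorem tailInf_le {M : ℝ} (hA : ∀ a, ‖A a‖ ≤ M * l1Norm a) (n : ℕ) : tailInf A n ≤ M :=
  (tailInf_le_norm A (single_mem_tailUnitSphere n)).trans
    (by simpa [l1Norm_single] using hA (Finsupp.single n 1))

theorem exists_norm_lt_of_tailInf_lt {n : ℕ} {r : ℝ} (h : tailInf A n < r) :
    ∃ a ∈ Finsupp.supported ℝ ℝ (Set.Ici n), l1Norm a = 1 ∧ ‖A a‖ < r := by
  obtain ⟨⟨a, ha, ha1⟩, hr⟩ := exists_lt_of_ciInf_lt h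
  exact ⟨a, ha, ha1, hr⟩

theorem exists_unit_sequence_l1_le {m M : ℝ} (hm : 0 < m) (hA₁ : ∀ a, m * l1Norm a ≤ ‖A a‖)
    (hA₂ : ∀ a, ‖A a‖ ≤ M * l1Norm a) {K : ℝ} (hK : 1 < K) :
    ∃ u : ℕ → X, (∀ j, ‖u j‖ = 1) ∧
      ∀ (t : Finset ℕ) (b : ℕ → ℝ), ∑ j ∈ t, |b j| ≤ K * ‖∑ j ∈ t, b j • u j‖ := by
  set c := tailInf A
  have hbdd : BddAbove (Set.range c) := ⟨M, Set.forall_mem_range.2 (tailInf_le A hA₂)⟩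
  have hC : 0 < ⨆ n, c n := hm.trans_le ((le_tailInf A hA₁ 0).trans (le_ciSup hbdd 0))
  obtain ⟨n₀, hn₀⟩ : ∃ n₀, ⨆ n, c n < K * c n₀ := by
    obtain ⟨n₀, h⟩ := exists_lt_of_lt_ciSup (div_lt_self hC hK)
    exact ⟨n₀, by rwa [div_lt_iff₀' (by linarith)] at h⟩
  choose W hW_supp hW_l1 hW_lt using fun n =>
    exists_norm_lt_of_tailInf_lt A ((le_ciSup hbdd n).trans_lt hn₀)
  obtain ⟨ν, hν₀, hν_disj⟩ := exists_pairwise_disjoint_comp (fun n => (W n).support)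
    (fun n _ hi => (Finsupp.mem_supported ℝ _).1 (hW_supp n) hi) n₀
  set d := fun j => ‖A (W (ν j))‖
  have hd : ∀ j, 0 < d j := fun j => hm.trans_le (by simpa [hW_l1] using hA₁ (W (ν j)))
  refine ⟨fun j => (d j)⁻¹ • A (W (ν j)), fun j => ?_, fun t b => ?_⟩
  · simp [norm_smul, d, (hd j).ne']
  set w := ∑ j ∈ t, (b j / d j) • W (ν j)
  have hAw : A w = ∑ j ∈ t, b j • (d j)⁻¹ • A (W (ν j)) := by
    simp [w, smul_smul, div_eq_mul_inv]
  have hw_supp : w ∈ Finsupp.supported ℝ ℝ (Set.Ici n₀) :=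
    Submodule.sum_mem _ fun j _ => Submodule.smul_mem _ _
      (Finsupp.supported_mono (Set.Ici_subset_Ici.2 (hν₀ j)) (hW_supp _))
  have hw_l1 : l1Norm w = ∑ j ∈ t, |b j| / d j := by
    rw [l1Norm_sum_of_pairwise_disjoint _
      (fun j k h => (hν_disj h).mono Finsupp.support_smul Finsupp.support_smul)]
    simp [l1Norm_smul, hW_l1, abs_div, abs_of_pos (hd _)]
  calc ∑ j ∈ t, |b j| ≤ ∑ j ∈ t, K * c n₀ * (|b j| / d j) := Finset.sum_le_sum fun j _ => by
        calc |b j| = d j * (|b j| / d j) := (mul_div_cancel₀ _ (hd j).ne').symm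
          _ ≤ K * c n₀ * (|b j| / d j) :=
            mul_le_mul_of_nonneg_right (hW_lt (ν j)).le (div_nonneg (abs_nonneg _) (hd j).le)
    _ = K * (c n₀ * l1Norm w) := by
        rw [hw_l1, Finset.mul_sum, Finset.mul_sum]; simp only [mul_assoc]
    _ ≤ K * ‖A w‖ := by gcongr; exact tailInf_mul_l1Norm_le A hw_supp
    _ = K * ‖∑ j ∈ t, b j • (d j)⁻¹ • A (W (ν j))‖ := by rw [hAw]

end James

section IsL1Sequence

variable {X ι : Type*} [AddCommGroup X] [Module ℝ X]

def IsL1Sequence (N : Seminorm ℝ X) (x : ι → X) : Prop :=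
  ∀ (t : Finset ι) (b : ι → ℝ), N (∑ i ∈ t, b i • x i) = ∑ i ∈ t, |b i|

variable {N : Seminorm ℝ X} {x : ι → X}

theorem IsL1Sequence.apply_eq_one (hN : IsL1Sequence N x) (i : ι) : N (x i) = 1 := by
  simpa using hN {i} 1

theorem IsL1Sequence.apply_sum_mono (hN : IsL1Sequence N x) {s t : Finset ι} (hst : s ⊆ t)
    (b : ι → ℝ) : N (∑ i ∈ s, b i • x i) ≤ N (∑ i ∈ t, b i • x i) := by
  rw [hN, hN]
  exact Finset.sum_le_sum_of_subset_of_nonneg hst fun i _ _ => abs_nonneg _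

theorem IsL1Sequence.two_le_add (hN : IsL1Sequence N x) {i j : ι} (hij : i ≠ j) :
    2 ≤ N (x i + x j) := by
  classical
  have h := hN {i, j} fun _ => 1
  rw [Finset.sum_pair hij, Finset.sum_pair hij, one_smul, one_smul, abs_one] at h
  linarith

theorem IsL1Sequence.two_le_sub (hN : IsL1Sequence N x) {i j : ι} (hij : i ≠ j) :
    2 ≤ N (x i - x j) := by
  classical
  have h := hN {i, j} fun k => if k = i then 1 else -1
  rw [Finset.sum_pair hij, Finset.sum_pair hij] at h
  norm_num [hij.symm, ← sub_eq_add_neg] at h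
  norm_num [h]

end IsL1Sequence

section Renorming

variable {X : Type*} [NormedAddCommGroup X] [NormedSpace ℝ X]

theorem exists_dual_comp_eq_of_abs_le {V : Type*} [AddCommGroup V] [Module ℝ V]
    (S : V →ₗ[ℝ] X) (hS : Function.Injective S) (φ : V →ₗ[ℝ] ℝ) {C : ℝ} (hC : 0 ≤ C)
    (hφ : ∀ v, |φ v| ≤ C * ‖S v‖) :
    ∃ g : StrongDual ℝ X, ‖g‖ ≤ C ∧ ∀ v, g (S v) = φ v := by
  let e := LinearEquiv.ofInjective S hS
  let ψ : LinearMap.range S →ₗ[ℝ] ℝ := φ ∘ₗ e.symm.toLinearMap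
  have hψ : ∀ y, ‖ψ y‖ ≤ C * ‖y‖ := fun y => by
    simpa [ψ, e] using hφ (e.symm y)
  obtain ⟨g, hg, hgn⟩ := exists_extension_norm_eq _ (ψ.mkContinuous C hψ)
  refine ⟨g, hgn ▸ ψ.mkContinuous_norm_le hC hψ, fun v => ?_⟩
  simpa [ψ, e] using hg (e v)

variable {ι : Type*}

theorem exists_dual_apply_eq_of_l1_le (u : ι → X) {C : ℝ} (hC : 0 ≤ C)
    (hu : ∀ (t : Finset ι) (b : ι → ℝ), ∑ i ∈ t, |b i| ≤ C * ‖∑ i ∈ t, b i • u i‖)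
    (s : ι → ℝ) (hs : ∀ i, |s i| ≤ 1) :
    ∃ g : StrongDual ℝ X, ‖g‖ ≤ C ∧ ∀ i, g (u i) = s i := by
  classical
  let S := Finsupp.linearCombination ℝ u
  have hS : ∀ f, ∑ i ∈ f.support, |f i| ≤ C * ‖S f‖ := fun f => by
    simpa [S, Finsupp.linearCombination_apply, Finsupp.sum] using hu f.support f
  have hinj : Function.Injective S := by
    refine (injective_iff_map_eq_zero S).2 fun f hf => ?_
    by_contra hne
    have hpos : 0 < ∑ i ∈ f.support, |f i| :=
      Finset.sum_pos (fun i hi => abs_pos.2 (Finsupp.mem_support_iff.1 hi))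
        (Finsupp.support_nonempty_iff.2 hne)
    have := hS f
    rw [hf, norm_zero, mul_zero] at this
    linarith
  have hφ : ∀ f, |Finsupp.linearCombination ℝ s f| ≤ C * ‖S f‖ := fun f => by
    refine le_trans ?_ (hS f)
    rw [Finsupp.linearCombination_apply, Finsupp.sum]
    refine (Finset.abs_sum_le_sum_abs _ _).trans (Finset.sum_le_sum fun i _ => ?_)
    rw [smul_eq_mul, abs_mul]
    exact mul_le_of_le_one_right (abs_nonneg _) (hs i)
  obtain ⟨g, hg, hgS⟩ := exists_dual_comp_eq_of_abs_le S hinj _ hC hφ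
  exact ⟨g, hg, fun i => by simpa [S] using hgS (Finsupp.single i 1)⟩

theorem abs_sign_le_one (x : ℝ) : |(SignType.sign x : ℝ)| ≤ 1 := by
  rcases SignType.sign x with _ | _ | _ <;> simp

theorem exists_seminorm_isL1Sequence (u : ι → X) (hu1 : ∀ i, ‖u i‖ ≤ 1) {C : ℝ}
    (hC : 1 ≤ C)
    (hu : ∀ (t : Finset ι) (b : ι → ℝ), ∑ i ∈ t, |b i| ≤ C * ‖∑ i ∈ t, b i • u i‖) :
    ∃ N : Seminorm ℝ X, (∀ z, ‖z‖ ≤ N z ∧ N z ≤ C * ‖z‖) ∧ IsL1Sequence N u := by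
  let G := {g : StrongDual ℝ X // ‖g‖ ≤ C ∧ ∀ i, |g (u i)| ≤ 1}
  let p : G → Seminorm ℝ X := fun g => (normSeminorm ℝ ℝ).comp g.1.toLinearMap
  have hp : ∀ g z, p g z ≤ C * ‖z‖ := fun g z =>
    (g.1.le_opNorm z).trans (mul_le_mul_of_nonneg_right g.2.1 (norm_nonneg z))
  have hbdd : ∀ z, BddAbove (Set.range fun g => p g z) := fun z =>
    ⟨C * ‖z‖, Set.forall_mem_range.2 (hp · z)⟩
  have hN : ∀ z, (⨆ g, p g) z = ⨆ g, p g z := fun z =>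
    Seminorm.iSup_apply (Seminorm.bddAbove_range_iff.2 hbdd)
  have : Nonempty G := ⟨⟨0, by simp [zero_le_one.trans hC]⟩⟩
  refine ⟨⨆ g, p g, fun z => ⟨?_, ?_⟩, fun t b => le_antisymm ?_ ?_⟩ <;> simp only [hN]
  · obtain ⟨g, hg, hgz⟩ := exists_dual_vector'' ℝ z
    have hgu : ∀ i, |g (u i)| ≤ 1 := fun i =>
      (g.le_opNorm _).trans (mul_le_one₀ hg (norm_nonneg _) (hu1 i))
    refine le_ciSup_of_le (hbdd z) ⟨g, hg.trans hC, hgu⟩ ?_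
    simp [p, hgz]
  · exact ciSup_le (hp · z)
  · refine ciSup_le fun g => ?_
    simp only [p, Seminorm.comp_apply, coe_normSeminorm, ContinuousLinearMap.coe_coe, map_sum,
      map_smul, smul_eq_mul, Real.norm_eq_abs]
    refine (Finset.abs_sum_le_sum_abs _ _).trans (Finset.sum_le_sum fun i _ => ?_)
    rw [abs_mul]
    exact mul_le_of_le_one_right (abs_nonneg _) (g.2.2 i)
  · obtain ⟨g, hg, hgu⟩ := exists_dual_apply_eq_of_l1_le u (zero_le_one.trans hC) hu
      (fun i => SignType.sign (b i)) fun i => abs_sign_le_one (b i)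
    refine le_ciSup_of_le (hbdd _) ⟨g, hg, fun i => hgu i ▸ abs_sign_le_one (b i)⟩ ?_
    simp only [p, Seminorm.comp_apply, coe_normSeminorm, ContinuousLinearMap.coe_coe, map_sum,
      map_smul, smul_eq_mul, Real.norm_eq_abs, hgu, self_mul_sign]
    exact le_abs_self _

end Renorming

theorem contains_l1_renorming_bimonotone_symmetrically_two_separated_general
    {X : Type*} [NormedAddCommGroup X] [NormedSpace ℝ X]
    (Y : Submodule ℝ X)
    (e : lp (fun _ : ℕ => ℝ) 1 ≃L[ℝ] Y)
    (ε : ℝ) (hε : ε ∈ Set.Ioo (0 : ℝ) 1) :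
    ∃ N : Seminorm ℝ X,
      (∀ z : X, ((1 + ε) ^ 2)⁻¹ * ‖z‖ ≤ N z ∧ N z ≤ (1 + ε) * ‖z‖) ∧
      ∃ x : ℕ → X,
        (∀ i, N (x i) = 1) ∧
        (∀ k n, k ≤ n → ∀ a : ℕ → ℝ,
          N (∑ i ∈ Finset.range k, a i • x i) ≤ N (∑ i ∈ Finset.range n, a i • x i) ∧
          N (∑ i ∈ Finset.Ico k n, a i • x i) ≤ N (∑ i ∈ Finset.range n, a i • x i)) ∧
        (∀ i j, i ≠ j → 2 ≤ N (x i + x j) ∧ 2 ≤ N (x i - x j)) := by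
  obtain ⟨A, m, M, hm, hA₁, hA₂⟩ := exists_l1Norm_bounds_of_equiv Y e
  obtain ⟨u, hu_norm, hu⟩ :=
    exists_unit_sequence_l1_le A hm hA₁ hA₂ (K := 1 + ε) (by linarith [hε.1])
  obtain ⟨N, hN, hN_l1⟩ :=
    exists_seminorm_isL1Sequence u (fun i => (hu_norm i).le) (by linarith [hε.1]) hu
  have hsq : ((1 + ε) ^ 2)⁻¹ ≤ 1 := inv_le_one_of_one_le₀ (by nlinarith [hε.1])
  refine ⟨N, fun z => ⟨?_, (hN z).2⟩, u, hN_l1.apply_eq_one, fun k n hkn a => ⟨?_, ?_⟩,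
    fun i j hij => ⟨hN_l1.two_le_add hij, hN_l1.two_le_sub hij⟩⟩
  · exact (mul_le_of_le_one_left (norm_nonneg z) hsq).trans (hN z).1
  · exact hN_l1.apply_sum_mono (Finset.range_subset_range.2 hkn) a
  · exact hN_l1.apply_sum_mono (fun i hi => Finset.mem_range.2 (Finset.mem_Ico.1 hi).2) a

/-- If `X` contains a subspace isomorphic to `ℓ¹`, then for every
`ε ∈ (0,1)` there is an equivalent norm `N` with `(1+ε)⁻²‖z‖ ≤ N z ≤ (1+ε)‖z‖` whose
unit sphere contains a normalized bimonotone basic sequence that is symmetrically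
2-separated. -/
theorem contains_l1_renorming_bimonotone_symmetrically_two_separated
    {X : Type*} [NormedAddCommGroup X] [NormedSpace ℝ X] [CompleteSpace X]
    (Y : Submodule ℝ X) (hY : IsClosed (Y : Set X))
    (e : lp (fun _ : ℕ => ℝ) 1 ≃L[ℝ] Y)
    (ε : ℝ) (hε : ε ∈ Set.Ioo (0 : ℝ) 1) :
    ∃ N : Seminorm ℝ X,
      (∀ z : X, ((1 + ε) ^ 2)⁻¹ * ‖z‖ ≤ N z ∧ N z ≤ (1 + ε) * ‖z‖) ∧
      ∃ x : ℕ → X,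
        (∀ i, N (x i) = 1) ∧
        (∀ k n, k ≤ n → ∀ a : ℕ → ℝ,
          N (∑ i ∈ Finset.range k, a i • x i) ≤ N (∑ i ∈ Finset.range n, a i • x i) ∧
          N (∑ i ∈ Finset.Ico k n, a i • x i) ≤ N (∑ i ∈ Finset.range n, a i • x i)) ∧
        (∀ i j, i ≠ j → 2 ≤ N (x i + x j) ∧ 2 ≤ N (x i - x j)) :=
  contains_l1_renorming_bimonotone_symmetrically_two_separated_general Y e ε hε
end

section
/- Let T : ℓ¹ → X be a linear embedding with ‖x‖₁ ≤ ‖Tx‖ ≤ (1+ε)‖x‖₁ for all x, and let Y = T(ℓ¹). Define |y|_Y = inf{ ‖x‖₁ + ‖y − Tx‖ : x ∈ ℓ¹ } for y ∈ Y. Then |·|_Y is a norm on Y satisfying (1+ε)^{-1}‖y‖ ≤ |y|_Y ≤ ‖y‖ for all y ∈ Y, and T : ℓ¹ → (Y, |·|_Y) is an isometry. -/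
/-! On `Y = T(ℓ¹)` the infimum is attained at the preimage, `N (T u) = ‖u‖`: for every `v`,
`‖v‖ + ‖T u - T v‖ ≥ ‖v‖ + ‖u - v‖ ≥ ‖u‖` because `T` does not shrink norms. So `N` on `Y` is
the `ℓ¹` norm transported by `T`, and the norm axioms and the comparison with `‖·‖` follow from
those of `ℓ¹` and the two-sided bound on `T`. -/

open Filter Topology

theorem iInf_norm_add_norm_sub_map_eq_norm {E F 𝓕 : Type*} [SeminormedAddCommGroup E]
    [SeminormedAddCommGroup F] [FunLike 𝓕 E F] [AddMonoidHomClass 𝓕 E F]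
    (T : 𝓕) (hT : ∀ v, ‖v‖ ≤ ‖T v‖) (u : E) :
    ⨅ v, (‖v‖ + ‖T u - T v‖) = ‖u‖ := by
  refine IsGLB.ciInf_eq (IsLeast.isGLB ⟨⟨u, by simp⟩, Set.forall_mem_range.2 fun v => ?_⟩)
  calc ‖u‖ ≤ ‖v‖ + ‖u - v‖ := norm_le_insert' u v
    _ ≤ ‖v‖ + ‖T u - T v‖ := by grw [hT (u - v), map_sub]

/-- If `T : ℓ¹ → X` satisfies `‖v‖₁ ≤ ‖T v‖ ≤ (1+ε)‖v‖₁`, then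
`N y = inf { ‖v‖₁ + ‖y − T v‖ }` is a norm on `Y = T(ℓ¹)` with
`(1+ε)⁻¹‖y‖ ≤ N y ≤ ‖y‖`, and `T : ℓ¹ → (Y, N)` is an isometry. -/
theorem infimum_norm_on_l1_image
    {X : Type*} [NormedAddCommGroup X] [NormedSpace ℝ X]
    (ε : ℝ) (hε : ε ∈ Set.Ioo (0 : ℝ) 1)
    (T : lp (fun _ : ℕ => ℝ) 1 →L[ℝ] X)
    (hT : ∀ v, ‖v‖ ≤ ‖T v‖ ∧ ‖T v‖ ≤ (1 + ε) * ‖v‖)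
    (N : X → ℝ)
    (hN : ∀ y : X, N y = ⨅ v : lp (fun _ : ℕ => ℝ) 1, (‖v‖ + ‖y - T v‖)) :
    (∀ y z : X, y ∈ Set.range T → z ∈ Set.range T → N (y + z) ≤ N y + N z) ∧
    (∀ (c : ℝ) (y : X), y ∈ Set.range T → N (c • y) = |c| * N y) ∧
    (∀ y ∈ Set.range T, N y = 0 → y = 0) ∧
    (∀ y ∈ Set.range T, (1 + ε)⁻¹ * ‖y‖ ≤ N y ∧ N y ≤ ‖y‖) ∧
    (∀ v, N (T v) = ‖v‖) := by
  have hNT (v) : N (T v) = ‖v‖ :=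
    (hN _).trans (iInf_norm_add_norm_sub_map_eq_norm T (fun v => (hT v).1) v)
  refine ⟨?_, ?_, ?_, ?_, hNT⟩
  · rintro _ _ ⟨u, rfl⟩ ⟨v, rfl⟩
    simpa only [← map_add, hNT] using norm_add_le u v
  · rintro c _ ⟨u, rfl⟩
    rw [← map_smul, hNT, hNT, norm_smul, Real.norm_eq_abs]
  · rintro _ ⟨u, rfl⟩ h
    rw [norm_eq_zero.1 ((hNT u).symm.trans h), map_zero]
  · rintro _ ⟨u, rfl⟩
    rw [hNT, inv_mul_le_iff₀ (by linarith [hε.1])]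
    exact ⟨(hT u).2, (hT u).1⟩
end

section
/- Let X be a separable Banach space and let (f_n) ⊆ B_{X*} be a sequence of norm-at-most-one functionals with ‖x‖ = sup_n |f_n(x)| for all x ∈ X. For δ > 0, define |||x|||² = ‖x‖² + δ Σ_{n=1}^∞ 2^{-n} f_n(x)². Then |||·||| is a strictly convex norm on X satisfying ‖x‖ ≤ |||x||| ≤ √(1+δ) ‖x‖ for all x. -/
/-!
Put `T x := (√(δ 2^{-(n+1)}) f_n x)_n ∈ ℓ²`. Then `|||x|||` is the norm of `(‖x‖, T x)` in the
Hilbert sum `ℝ ⊕₂ ℓ²`, and `x ↦ (‖x‖, T x)` is subadditive coordinatewise, so `|||·|||` inherits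
the triangle inequality from `ℝ ⊕₂ ℓ²`. That space is strictly convex and `T` is injective because
the `f_n` norm `X`, which makes `|||·|||` strictly convex.
-/

section NormGraph

variable {X E : Type*} [NormedAddCommGroup X] [NormedSpace ℝ X]
  [NormedAddCommGroup E] [InnerProductSpace ℝ E] (T : X →ₗ[ℝ] E)

def normGraph (x : X) : WithLp 2 (ℝ × E) := WithLp.toLp 2 (‖x‖, T x)

lemma norm_normGraph_sq (x : X) : ‖normGraph T x‖ ^ 2 = ‖x‖ ^ 2 + ‖T x‖ ^ 2 := by
  rw [WithLp.prod_norm_sq_eq_of_L2]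
  simp [normGraph]

lemma norm_le_norm_normGraph (x : X) : ‖x‖ ≤ ‖normGraph T x‖ := by
  rw [← sq_le_sq₀ (norm_nonneg _) (norm_nonneg _), norm_normGraph_sq]
  exact le_add_of_nonneg_right (sq_nonneg _)

lemma norm_normGraph_le_of_sq_le {C : ℝ} (hC : 0 ≤ C) {x : X} (hx : ‖T x‖ ^ 2 ≤ C * ‖x‖ ^ 2) :
    ‖normGraph T x‖ ≤ √(1 + C) * ‖x‖ := by
  rw [← sq_le_sq₀ (norm_nonneg _) (by positivity), norm_normGraph_sq, mul_pow,
    Real.sq_sqrt (by positivity)]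
  linarith

lemma norm_normGraph_add_le_norm_add (x y : X) :
    ‖normGraph T (x + y)‖ ≤ ‖normGraph T x + normGraph T y‖ := by
  rw [← sq_le_sq₀ (norm_nonneg _) (norm_nonneg _), norm_normGraph_sq,
    WithLp.prod_norm_sq_eq_of_L2]
  have hfst : ‖(normGraph T x + normGraph T y).fst‖ = ‖x‖ + ‖y‖ := by
    simp [normGraph, abs_of_nonneg (add_nonneg (norm_nonneg x) (norm_nonneg y))]
  have hsnd : (normGraph T x + normGraph T y).snd = T (x + y) := by
    simp [normGraph]
  rw [hfst, hsnd]
  gcongr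
  exact norm_add_le x y

lemma norm_normGraph_add_le (x y : X) :
    ‖normGraph T (x + y)‖ ≤ ‖normGraph T x‖ + ‖normGraph T y‖ :=
  (norm_normGraph_add_le_norm_add T x y).trans (norm_add_le _ _)

lemma norm_normGraph_smul (c : ℝ) (x : X) :
    ‖normGraph T (c • x)‖ = |c| * ‖normGraph T x‖ := by
  rw [← sq_eq_sq₀ (norm_nonneg _) (by positivity), norm_normGraph_sq, mul_pow,
    norm_normGraph_sq, map_smul, norm_smul, norm_smul, Real.norm_eq_abs]
  simp only [mul_pow, sq_abs]
  ring

lemma norm_normGraph_add_lt_two (hT : Function.Injective T) {u v : X}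
    (hu : ‖normGraph T u‖ = 1) (hv : ‖normGraph T v‖ = 1) (huv : u ≠ v) :
    ‖normGraph T (u + v)‖ < 2 := by
  have hne : normGraph T u ≠ normGraph T v := fun h =>
    huv (hT (congrArg (fun p : WithLp 2 (ℝ × E) => p.snd) h))
  have hlt : ‖normGraph T u + normGraph T v‖ < ‖normGraph T u‖ + ‖normGraph T v‖ :=
    (norm_add_le _ _).lt_of_ne fun h => hne (eq_of_norm_eq_of_norm_add_eq (hu.trans hv.symm) h)
  calc ‖normGraph T (u + v)‖ ≤ ‖normGraph T u + normGraph T v‖ :=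
        norm_normGraph_add_le_norm_add T u v
    _ < 2 := by linarith

end NormGraph

section WeightedL2

variable {X : Type*} [NormedAddCommGroup X] [NormedSpace ℝ X] {w : ℕ → ℝ} {f : ℕ → X →L[ℝ] ℝ}

lemma ContinuousLinearMap.sq_apply_le_sq_norm {g : X →L[ℝ] ℝ} (hg : ‖g‖ ≤ 1) (x : X) :
    g x ^ 2 ≤ ‖x‖ ^ 2 := by
  rw [← sq_abs]
  gcongr
  simpa using g.le_of_opNorm_le hg x

lemma summable_mul_sq_apply (hw0 : ∀ n, 0 ≤ w n) (hw : Summable w) (hf : ∀ n, ‖f n‖ ≤ 1)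
    (x : X) : Summable fun n => w n * f n x ^ 2 :=
  (hw.mul_right (‖x‖ ^ 2)).of_nonneg_of_le (fun n => mul_nonneg (hw0 n) (sq_nonneg _))
    fun n => mul_le_mul_of_nonneg_left ((f n).sq_apply_le_sq_norm (hf n) x) (hw0 n)

lemma tsum_mul_sq_apply_le (hw0 : ∀ n, 0 ≤ w n) (hw : Summable w) (hf : ∀ n, ‖f n‖ ≤ 1)
    (x : X) : ∑' n, w n * f n x ^ 2 ≤ (∑' n, w n) * ‖x‖ ^ 2 := by
  rw [← tsum_mul_right]
  exact (summable_mul_sq_apply hw0 hw hf x).tsum_le_tsum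
    (fun n => mul_le_mul_of_nonneg_left ((f n).sq_apply_le_sq_norm (hf n) x) (hw0 n))
    (hw.mul_right _)

lemma memℓp_sqrt_mul_apply (hw0 : ∀ n, 0 ≤ w n) {x : X}
    (hx : Summable fun n => w n * f n x ^ 2) :
    Memℓp (fun n => √(w n) * f n x) 2 := by
  refine memℓp_gen ?_
  convert hx using 2 with n
  rw [ENNReal.toReal_ofNat, Real.rpow_two, Real.norm_eq_abs, sq_abs, mul_pow,
    Real.sq_sqrt (hw0 n)]

noncomputable def weightedL2 (hw0 : ∀ n, 0 ≤ w n)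
    (hsum : ∀ x, Summable fun n => w n * f n x ^ 2) :
    X →ₗ[ℝ] lp (fun _ : ℕ => ℝ) 2 where
  toFun x := ⟨fun n => √(w n) * f n x, memℓp_sqrt_mul_apply hw0 (hsum x)⟩
  map_add' x y := by
    ext n
    simp only [map_add, lp.coeFn_add, Pi.add_apply]
    ring
  map_smul' c x := by
    ext n
    simp only [map_smul, smul_eq_mul, lp.coeFn_smul, Pi.smul_apply, RingHom.id_apply]
    ring

variable (hw0 : ∀ n, 0 ≤ w n) (hsum : ∀ x, Summable fun n => w n * f n x ^ 2)

lemma weightedL2_apply (x : X) (n : ℕ) : weightedL2 hw0 hsum x n = √(w n) * f n x := rfl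

lemma norm_weightedL2_sq (x : X) : ‖weightedL2 hw0 hsum x‖ ^ 2 = ∑' n, w n * f n x ^ 2 := by
  have h := lp.norm_rpow_eq_tsum (by norm_num : 0 < (2 : ENNReal).toReal) (weightedL2 hw0 hsum x)
  simp only [ENNReal.toReal_ofNat, Real.rpow_two] at h
  rw [h]
  refine tsum_congr fun n => ?_
  rw [weightedL2_apply, Real.norm_eq_abs, sq_abs, mul_pow, Real.sq_sqrt (hw0 n)]

lemma weightedL2_injective (hw : ∀ n, 0 < w n) (hsep : ∀ x : X, (∀ n, f n x = 0) → x = 0) :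
    Function.Injective (weightedL2 hw0 hsum) := by
  refine (injective_iff_map_eq_zero _).mpr fun x hx => hsep x fun n => ?_
  have hn : √(w n) * f n x = 0 := by rw [← weightedL2_apply hw0 hsum, hx, lp.coeFn_zero]; rfl
  exact (mul_eq_zero.mp hn).resolve_left (Real.sqrt_pos.mpr (hw n)).ne'

end WeightedL2

lemma eq_zero_of_forall_apply_eq_zero {X : Type*} [NormedAddCommGroup X] {f : ℕ → X → ℝ}
    (hsup : ∀ x : X, ‖x‖ = ⨆ n, |f n x|) {x : X} (hx : ∀ n, f n x = 0) : x = 0 := by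
  rw [← norm_eq_zero, hsup x]
  simp [hx]

theorem strictly_convex_norm_from_functionals_general
    {X : Type*} [NormedAddCommGroup X] [NormedSpace ℝ X]
    (f : ℕ → X →L[ℝ] ℝ) (hf1 : ∀ n, ‖f n‖ ≤ 1)
    (hsup : ∀ x : X, ‖x‖ = ⨆ n, |f n x|)
    (δ : ℝ) (hδ : 0 < δ)
    (N : X → ℝ) (hNpos : ∀ x, 0 ≤ N x)
    (hN : ∀ x, N x ^ 2 = ‖x‖ ^ 2 + δ * ∑' n : ℕ, (2 : ℝ)⁻¹ ^ (n + 1) * (f n x) ^ 2) :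
    (∀ x y, N (x + y) ≤ N x + N y) ∧
    (∀ (c : ℝ) (x : X), N (c • x) = |c| * N x) ∧
    (∀ x, N x = 0 → x = 0) ∧
    (∀ u v : X, N u = 1 → N v = 1 → u ≠ v → N (u + v) < 2) ∧
    (∀ x, ‖x‖ ≤ N x ∧ N x ≤ Real.sqrt (1 + δ) * ‖x‖) := by
  set w : ℕ → ℝ := fun n => δ * 2⁻¹ ^ (n + 1)
  have hw : ∀ n, 0 < w n := fun n => by positivity
  have hwδ : HasSum w δ := by
    convert hasSum_geometric_two' δ using 2 with n
    simp only [w, pow_succ, inv_pow]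
    ring
  have hsum := summable_mul_sq_apply (fun n => (hw n).le) hwδ.summable hf1
  set T := weightedL2 (fun n => (hw n).le) hsum
  have hNT : N = fun x => ‖normGraph T x‖ := funext fun x => by
    rw [← sq_eq_sq₀ (hNpos x) (norm_nonneg _), hN, norm_normGraph_sq, norm_weightedL2_sq,
      ← tsum_mul_left]
    simp only [w, mul_assoc]
  have hT : Function.Injective T :=
    weightedL2_injective _ hsum hw fun x => eq_zero_of_forall_apply_eq_zero hsup
  subst hNT
  refine ⟨norm_normGraph_add_le T, norm_normGraph_smul T, fun x hx => ?_,
    fun u v => norm_normGraph_add_lt_two T hT, fun x => ⟨norm_le_norm_normGraph T x, ?_⟩⟩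
  · exact norm_eq_zero.mp (le_antisymm ((norm_le_norm_normGraph T x).trans hx.le) (norm_nonneg x))
  · refine norm_normGraph_le_of_sq_le T hδ.le ?_
    rw [norm_weightedL2_sq, ← hwδ.tsum_eq]
    exact tsum_mul_sq_apply_le (fun n => (hw n).le) hwδ.summable hf1 x

/-- If `(f_n)` are norm-at-most-one functionals on a separable space
with `‖x‖ = sup_n |f_n x|`, and `N x² = ‖x‖² + δ Σ 2^{-(n+1)} f_n(x)²`, then `N` is a
strictly convex norm with `‖x‖ ≤ N x ≤ √(1+δ)‖x‖`. -/
theorem strictly_convex_norm_from_functionals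
    {X : Type*} [NormedAddCommGroup X] [NormedSpace ℝ X]
    [TopologicalSpace.SeparableSpace X]
    (f : ℕ → X →L[ℝ] ℝ) (hf1 : ∀ n, ‖f n‖ ≤ 1)
    (hsup : ∀ x : X, ‖x‖ = ⨆ n, |f n x|)
    (δ : ℝ) (hδ : 0 < δ)
    (N : X → ℝ) (hNpos : ∀ x, 0 ≤ N x)
    (hN : ∀ x, N x ^ 2 = ‖x‖ ^ 2 + δ * ∑' n : ℕ, (2 : ℝ)⁻¹ ^ (n + 1) * (f n x) ^ 2) :
    (∀ x y, N (x + y) ≤ N x + N y) ∧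
    (∀ (c : ℝ) (x : X), N (c • x) = |c| * N x) ∧
    (∀ x, N x = 0 → x = 0) ∧
    (∀ u v : X, N u = 1 → N v = 1 → u ≠ v → N (u + v) < 2) ∧
    (∀ x, ‖x‖ ≤ N x ∧ N x ≤ Real.sqrt (1 + δ) * ‖x‖) :=
  strictly_convex_norm_from_functionals_general f hf1 hsup δ hδ N hNpos hN
end

section
/- If K^s(X) < 2 for a Banach space X, then there exists ε > 0 such that for every equivalent norm |||·||| on X that is (1+ε)-equivalent to the original norm, the unit sphere of (X, |||·|||) contains no symmetrically 2-separated sequence; in particular, K^s((X, |||·|||)) < 2. -/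
/-!
A `(1 + ε)`-equivalent renorming changes the symmetric Kottman constant by at most the factor
`(1 + ε)²`: rescaling a separated sequence of the new unit ball by `(1 + ε)⁻¹` puts it into the
old unit ball. So it suffices to pick `ε` with `(1 + ε)² K^s(X) < 2`; a symmetrically
2-separated sequence of unit vectors would force the new constant to be at least `2`.
-/

open Filter Topology

/-- The symmetric Kottman constant of `X` computed with respect to a norm
function `N`. -/
noncomputable def symKottmanWith {X : Type*} [AddGroup X] (N : X → ℝ) : ℝ :=
  sSup {σ : ℝ | 0 < σ ∧ ∃ x : ℕ → X, (∀ n, N (x n) ≤ 1) ∧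
    ∀ n k, n ≠ k → σ ≤ N (x n + x k) ∧ σ ≤ N (x n - x k)}

theorem symKottmanWith_nonneg {X : Type*} [AddGroup X] (N : X → ℝ) :
    0 ≤ symKottmanWith N :=
  Real.sSup_nonneg fun _ hσ => hσ.1.le

theorem le_symKottmanWith {X : Type*} [AddCommGroup X] (p : AddGroupSeminorm X) {σ : ℝ}
    (hσ : 0 < σ) {x : ℕ → X} (hx : ∀ n, p (x n) ≤ 1)
    (hsep : ∀ n k, n ≠ k → σ ≤ p (x n + x k) ∧ σ ≤ p (x n - x k)) :
    σ ≤ symKottmanWith p := by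
  refine le_csSup ⟨2, ?_⟩ ⟨hσ, x, hx, hsep⟩
  rintro τ ⟨-, y, hy, hysep⟩
  calc τ ≤ p (y 0 + y 1) := (hysep 0 1 zero_ne_one).1
    _ ≤ p (y 0) + p (y 1) := map_add_le_add p _ _
    _ ≤ 2 := by linarith [hy 0, hy 1]

theorem symKottmanWith_le_mul_of_le {E : Type*} [AddCommGroup E] [Module ℝ E]
    {p q : Seminorm ℝ E} {a b : ℝ} (ha : 0 < a) (hb : 0 < b)
    (hp : ∀ z, p z ≤ a * q z) (hq : ∀ z, q z ≤ b * p z) :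
    symKottmanWith q ≤ a * b * symKottmanWith p := by
  refine Real.sSup_le ?_ (by have := symKottmanWith_nonneg p; positivity)
  rintro σ ⟨hσ, x, hx, hsep⟩
  have hscale : ∀ z, p (a⁻¹ • z) = a⁻¹ * p z := fun z => by
    rw [map_smul_eq_mul, Real.norm_of_nonneg (inv_nonneg.2 ha.le)]
  have hsep' : ∀ z, σ ≤ q z → σ / (a * b) ≤ p (a⁻¹ • z) := fun z hz => by
    rw [hscale, div_le_iff₀ (by positivity)]
    calc σ ≤ b * p z := hz.trans (hq z)
      _ = a⁻¹ * p z * (a * b) := by field_simp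
  have := le_symKottmanWith p.toAddGroupSeminorm (σ := σ / (a * b)) (x := fun n => a⁻¹ • x n)
    (by positivity) (fun n => ?_) (fun n k hnk => ?_)
  · rwa [div_le_iff₀' (by positivity)] at this
  · show p (a⁻¹ • x n) ≤ 1
    rw [hscale, inv_mul_le_iff₀ ha, mul_one]
    exact (hp _).trans (mul_le_of_le_one_right ha.le (hx n))
  · show σ / (a * b) ≤ p (a⁻¹ • x n + a⁻¹ • x k) ∧ σ / (a * b) ≤ p (a⁻¹ • x n - a⁻¹ • x k)
    rw [← smul_add, ← smul_sub]
    exact ⟨hsep' _ (hsep n k hnk).1, hsep' _ (hsep n k hnk).2⟩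

theorem exists_pos_one_add_sq_mul_lt {K c : ℝ} (hK : K < c) :
    ∃ ε > (0 : ℝ), (1 + ε) ^ 2 * K < c := by
  have hcont : Continuous fun ε : ℝ => (1 + ε) ^ 2 * K := by fun_prop
  have hlt : ∀ᶠ ε in 𝓝 (0 : ℝ), (1 + ε) ^ 2 * K < c :=
    hcont.continuousAt.eventually_lt continuousAt_const (by simpa using hK)
  obtain ⟨ε, hε, hpos⟩ := ((hlt.filter_mono nhdsWithin_le_nhds).and
    (self_mem_nhdsWithin : ∀ᶠ ε in 𝓝[>] (0 : ℝ), 0 < ε)).exists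
  exact ⟨ε, hpos, hε⟩

theorem symKottman_lt_two_stable_under_small_renorming_general
    {X : Type*} [NormedAddCommGroup X] [NormedSpace ℝ X]
    (h : symKottmanWith (fun x : X => ‖x‖) < 2) :
    ∃ ε > (0 : ℝ), ∀ N : Seminorm ℝ X,
      (∀ z : X, (1 + ε)⁻¹ * ‖z‖ ≤ N z ∧ N z ≤ (1 + ε) * ‖z‖) →
      (¬ ∃ u : ℕ → X, (∀ n, N (u n) = 1) ∧
          ∀ n m, n ≠ m → 2 ≤ N (u n + u m) ∧ 2 ≤ N (u n - u m)) ∧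
      symKottmanWith (fun x : X => N x) < 2 := by
  obtain ⟨ε, hε, hεK⟩ := exists_pos_one_add_sq_mul_lt h
  refine ⟨ε, hε, fun N hN => ?_⟩
  have hpos : (0 : ℝ) < 1 + ε := by linarith
  have hK : symKottmanWith N < 2 := by
    refine lt_of_le_of_lt ?_ hεK
    rw [sq]
    exact symKottmanWith_le_mul_of_le (p := normSeminorm ℝ X) hpos hpos
      (fun z => (inv_mul_le_iff₀ hpos).1 (hN z).1) (fun z => (hN z).2)
  refine ⟨?_, hK⟩
  rintro ⟨u, hu, hsep⟩
  exact (le_symKottmanWith N.toAddGroupSeminorm two_pos (fun n => (hu n).le) hsep).not_gt hK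

/-- If `K^s(X) < 2` then there is `ε > 0` such that every
`(1+ε)`-equivalent renorming of `X` has no symmetrically 2-separated sequence of unit
vectors; in particular its symmetric Kottman constant stays below `2`. -/
theorem symKottman_lt_two_stable_under_small_renorming
    {X : Type*} [NormedAddCommGroup X] [NormedSpace ℝ X] [CompleteSpace X]
    (h : symKottmanWith (fun x : X => ‖x‖) < 2) :
    ∃ ε > (0 : ℝ), ∀ N : Seminorm ℝ X,
      (∀ z : X, (1 + ε)⁻¹ * ‖z‖ ≤ N z ∧ N z ≤ (1 + ε) * ‖z‖) →
      (¬ ∃ u : ℕ → X, (∀ n, N (u n) = 1) ∧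
          ∀ n m, n ≠ m → 2 ≤ N (u n + u m) ∧ 2 ≤ N (u n - u m)) ∧
      symKottmanWith (fun x : X => N x) < 2 :=
  symKottman_lt_two_stable_under_small_renorming_general h
end

section
/- Every basic sequence in a Banach space admits a block basis that is asymptotically monotone: there is a block basic sequence (z_n) whose partial-sum projections Q_n satisfy ‖Q_n‖ → 1. -/
/-!
Mazur's technique. If `F` is a finite-dimensional subspace and `t < 1`, compactness of the unit
sphere of `F` gives finitely many norm-one functionals, one of which exceeds `t` at each unit
vector of `F`. Their common kernel meets the span of any sufficiently many of the `x i`, and a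
vector `w` in it satisfies `t * ‖y‖ ≤ ‖y + c • w‖` for all `y ∈ F`. Choosing the blocks one after
another, with `F` spanned by the earlier ones and `t = exp (-2⁻¹ ^ m)` at step `m`, the `k`-th
projection constant of the block basis is at most `exp (∑_{m ≥ k} 2⁻¹ ^ m)`, which tends to `1`.
-/

open Filter Topology Finset Real Submodule Function

theorem linearIndependent_of_norm_sum_range_le {𝕜 E : Type*} [NormedField 𝕜]
    [NormedAddCommGroup E] [NormedSpace 𝕜 E] {x : ℕ → E} (hx : ∀ i, x i ≠ 0) {K : ℝ}
    (hK : ∀ k n, k ≤ n → ∀ a : ℕ → 𝕜,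
      ‖∑ i ∈ range k, a i • x i‖ ≤ K * ‖∑ i ∈ range n, a i • x i‖) :
    LinearIndependent 𝕜 x := by
  classical
  rw [linearIndependent_iff']
  intro s g hg i hi
  obtain ⟨n, hsn⟩ := s.exists_nat_subset_range
  set a : ℕ → 𝕜 := fun j => if j ∈ s then g j else 0
  have hpartial : ∀ k ≤ n, ∑ j ∈ range k, a j • x j = 0 := by
    have hn : ∑ j ∈ range n, a j • x j = 0 := by
      simp only [a, ite_smul, zero_smul, sum_ite_mem, inter_eq_right.2 hsn, hg]
    intro k hk
    simpa [hn] using hK k n hk a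
  have hin : i + 1 ≤ n := mem_range.1 (hsn hi)
  have : a i • x i = 0 := by
    rw [← sum_range_succ_sub_sum fun j => a j • x j, hpartial _ hin, hpartial _ (by omega),
      sub_zero]
  simpa [a, hi, hx i] using this

theorem LinearIndependent.exists_sum_ne_zero_forall_eq_zero {K V ι κ : Type*} [Field K]
    [AddCommGroup V] [Module K V] [Fintype κ] {x : ι → V} (hx : LinearIndependent K x)
    (f : κ → Module.Dual K V) (s : Finset ι) (hs : Fintype.card κ < s.card) :
    ∃ β : ι → K, ∑ i ∈ s, β i • x i ≠ 0 ∧ ∀ j, f j (∑ i ∈ s, β i • x i) = 0 := by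
  classical
  let L : (s → K) →ₗ[K] (κ → K) :=
    LinearMap.pi fun j => f j ∘ₗ Fintype.linearCombination K fun i : s => x i
  obtain ⟨c, hc, hc0⟩ := Submodule.exists_mem_ne_zero_of_ne_bot
    (LinearMap.ker_ne_bot_of_finrank_lt (f := L) (by simpa using hs))
  have hsum : ∑ i ∈ s, (if h : i ∈ s then c ⟨i, h⟩ else 0) • x i = ∑ i : s, c i • x i := by
    rw [← sum_attach s]
    simp
  refine ⟨fun i => if h : i ∈ s then c ⟨i, h⟩ else 0, ?_⟩
  rw [hsum]
  refine ⟨fun h => hc0 (funext (Fintype.linearIndependent_iff.1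
    (hx.comp _ Subtype.val_injective) c h)), fun j => ?_⟩
  simpa [L, Fintype.linearCombination_apply] using congr_fun (LinearMap.mem_ker.1 hc) j

theorem exists_forall_mem_eq_of_pairwise_disjoint {ι κ γ : Type*} [Nonempty γ] {E : ι → Set κ}
    (hE : Pairwise (Disjoint on E)) (β : ι → κ → γ) :
    ∃ α : κ → γ, ∀ m, ∀ i ∈ E m, α i = β m i := by
  classical
  refine ⟨fun i => if h : ∃ m, i ∈ E m then β h.choose i else Classical.arbitrary γ,
    fun m i hi => ?_⟩
  have h : ∃ m, i ∈ E m := ⟨m, hi⟩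
  dsimp only
  rw [dif_pos h, hE.eq fun hd => Set.disjoint_left.1 hd h.choose_spec hi]

theorem le_exp_sum_Ico_mul_of_le_exp_mul {u ε : ℕ → ℝ} (h : ∀ m, u m ≤ exp (ε m) * u (m + 1))
    {k n : ℕ} (hkn : k ≤ n) : u k ≤ exp (∑ j ∈ Ico k n, ε j) * u n := by
  induction n, hkn using Nat.le_induction with
  | base => simp
  | succ n hkn ih =>
    calc u k ≤ exp (∑ j ∈ Ico k n, ε j) * u n := ih
      _ ≤ exp (∑ j ∈ Ico k n, ε j) * (exp (ε n) * u (n + 1)) := by gcongr; exact h n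
      _ = exp (∑ j ∈ Ico k (n + 1), ε j) * u (n + 1) := by
        rw [sum_Ico_succ_top hkn, exp_add, mul_assoc]

section Mazur

variable {X : Type*} [NormedAddCommGroup X] [NormedSpace ℝ X]

theorem Submodule.exists_finset_strongDual_lt_of_norm_eq_one (F : Submodule ℝ X)
    [FiniteDimensional ℝ F] {t : ℝ} (ht : t < 1) :
    ∃ T : Finset (StrongDual ℝ X), (∀ f ∈ T, ‖f‖ ≤ 1) ∧
      ∀ u ∈ F, ‖u‖ = 1 → ∃ f ∈ T, t < f u := by
  classical
  have hcompact : IsCompact (((↑) : F → X) '' Metric.sphere 0 1) :=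
    (isCompact_sphere (0 : F) 1).image continuous_subtype_val
  choose g hg_norm hg_eq using fun u : Metric.sphere (0 : X) 1 =>
    exists_dual_vector ℝ (u : X) (norm_ne_zero_iff.2 (ne_zero_of_mem_unit_sphere u))
  obtain ⟨S, hS⟩ := hcompact.elim_finite_subcover (fun u => {v | t < g u v})
    (fun u => isOpen_lt continuous_const (g u).continuous) (by
      rintro _ ⟨v, hv, rfl⟩
      have hv1 : ‖(v : X)‖ = 1 := by simpa using hv
      exact Set.mem_iUnion.2 ⟨⟨v, by simpa using hv1⟩, by simp [hg_eq, hv1, ht]⟩)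
  refine ⟨S.image g, fun f hf => ?_, fun u hu hu1 => ?_⟩
  · obtain ⟨u, -, rfl⟩ := mem_image.1 hf
    exact (hg_norm u).le
  · obtain ⟨w, hwS, hw⟩ := Set.mem_iUnion₂.1 (hS ⟨⟨u, hu⟩, by simpa using hu1, rfl⟩)
    exact ⟨g w, mem_image_of_mem g hwS, hw⟩

theorem mul_norm_le_norm_add_smul_s16 {F : Submodule ℝ X} {T : Set (StrongDual ℝ X)} {t : ℝ}
    (hT : ∀ f ∈ T, ‖f‖ ≤ 1) (hTF : ∀ u ∈ F, ‖u‖ = 1 → ∃ f ∈ T, t < f u)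
    {w : X} (hw : ∀ f ∈ T, f w = 0) {y : X} (hy : y ∈ F) (c : ℝ) :
    t * ‖y‖ ≤ ‖y + c • w‖ := by
  rcases eq_or_ne y 0 with rfl | hy0
  · simp
  obtain ⟨f, hfT, hf⟩ := hTF (‖y‖⁻¹ • y) (F.smul_mem _ hy) (norm_smul_inv_norm hy0)
  have hfy : f y = ‖y‖ * f (‖y‖⁻¹ • y) := by
    rw [map_smul, smul_eq_mul, mul_inv_cancel_left₀ (norm_ne_zero_iff.2 hy0)]
  calc t * ‖y‖ ≤ f y := by
        rw [hfy, mul_comm t]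
        exact mul_le_mul_of_nonneg_left hf.le (norm_nonneg _)
    _ = f (y + c • w) := by simp [hw f hfT]
    _ ≤ ‖f‖ * ‖y + c • w‖ := (le_abs_self _).trans (f.le_opNorm _)
    _ ≤ ‖y + c • w‖ := mul_le_of_le_one_left (norm_nonneg _) (hT f hfT)

theorem LinearIndependent.exists_sum_Ico_mul_norm_le {x : ℕ → X} (hx : LinearIndependent ℝ x)
    (F : Submodule ℝ X) [FiniteDimensional ℝ F] {t : ℝ} (ht : t < 1) (n : ℕ) :
    ∃ M, n < M ∧ ∃ β : ℕ → ℝ, ∑ i ∈ Ico n M, β i • x i ≠ 0 ∧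
      ∀ y ∈ F, ∀ c : ℝ, t * ‖y‖ ≤ ‖y + c • ∑ i ∈ Ico n M, β i • x i‖ := by
  obtain ⟨T, hT, hTF⟩ := F.exists_finset_strongDual_lt_of_norm_eq_one ht
  obtain ⟨β, hβ, hβT⟩ := hx.exists_sum_ne_zero_forall_eq_zero
    (fun f : T => (f : StrongDual ℝ X).toLinearMap) (Ico n (n + T.card + 1))
    (by simp only [Fintype.card_coe, Nat.card_Ico]; omega)
  exact ⟨n + T.card + 1, by omega, β, hβ, fun y hy c =>
    mul_norm_le_norm_add_smul_s16 (T := ↑T) hT hTF (fun f hf => hβT ⟨f, hf⟩) hy c⟩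

theorem LinearIndependent.exists_blocks_norm_sum_range_le {x : ℕ → X}
    (hx : LinearIndependent ℝ x) {ε : ℕ → ℝ} (hε : ∀ m, 0 < ε m) :
    ∃ N : ℕ → ℕ, StrictMono N ∧ ∃ α : ℕ → ℝ, ∀ m,
      ∑ i ∈ Ico (N m) (N (m + 1)), α i • x i ≠ 0 ∧ ∀ a : ℕ → ℝ,
        ‖∑ j ∈ range m, a j • ∑ i ∈ Ico (N j) (N (j + 1)), α i • x i‖ ≤
          exp (ε m) * ‖∑ j ∈ range (m + 1), a j • ∑ i ∈ Ico (N j) (N (j + 1)), α i • x i‖ := by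
  have step : ∀ m n, ∃ M, n < M ∧ ∃ β : ℕ → ℝ, ∑ i ∈ Ico n M, β i • x i ≠ 0 ∧
      ∀ y ∈ span ℝ (x '' Set.Iio n), ∀ c : ℝ,
        exp (-ε m) * ‖y‖ ≤ ‖y + c • ∑ i ∈ Ico n M, β i • x i‖ := fun m n => by
    have := FiniteDimensional.span_of_finite ℝ ((Set.finite_Iio n).image x)
    exact hx.exists_sum_Ico_mul_norm_le _ (exp_lt_one_iff.2 (neg_neg_of_pos (hε m))) n
  choose next hnext β hβ hβF using step
  let N : ℕ → ℕ := fun m => Nat.rec 0 next m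
  have hN : StrictMono N := strictMono_nat_of_lt_succ fun m => hnext m (N m)
  obtain ⟨α, hα⟩ := exists_forall_mem_eq_of_pairwise_disjoint
    hN.monotone.pairwise_disjoint_on_Ico_succ fun m => β m (N m)
  have hblock : ∀ m, ∑ i ∈ Ico (N m) (N (m + 1)), α i • x i =
      ∑ i ∈ Ico (N m) (N (m + 1)), β m (N m) i • x i :=
    fun m => sum_congr rfl fun i hi => by rw [hα m i (Set.mem_Ico.2 (mem_Ico.1 hi))]
  have hmem : ∀ m, ∀ j < m,
      ∑ i ∈ Ico (N j) (N (j + 1)), α i • x i ∈ span ℝ (x '' Set.Iio (N m)) :=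
    fun m j hj => sum_mem fun i hi => smul_mem _ _ <| subset_span <|
      Set.mem_image_of_mem x ((mem_Ico.1 hi).2.trans_le (hN.monotone hj))
  refine ⟨N, hN, α, fun m => ⟨(hblock m).symm ▸ hβ m (N m), fun a => ?_⟩⟩
  have hy : ∑ j ∈ range m, a j • ∑ i ∈ Ico (N j) (N (j + 1)), α i • x i ∈
      span ℝ (x '' Set.Iio (N m)) :=
    sum_mem fun j hj => smul_mem _ _ (hmem m j (mem_range.1 hj))
  have := hβF m (N m) _ hy (a m)
  rw [exp_neg, inv_mul_le_iff₀ (exp_pos _)] at this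
  rwa [sum_range_succ, hblock m]

end Mazur

theorem basic_sequence_has_asymptotically_monotone_block_basis_general
    {X : Type*} [NormedAddCommGroup X] [NormedSpace ℝ X]
    (x : ℕ → X) (hnz : ∀ i, x i ≠ 0) (K : ℝ)
    (hbasic : ∀ k n, k ≤ n → ∀ a : ℕ → ℝ,
      ‖∑ i ∈ Finset.range k, a i • x i‖ ≤ K * ‖∑ i ∈ Finset.range n, a i • x i‖) :
    ∃ (E : ℕ → Finset ℕ) (α : ℕ → ℝ),
      (∀ m, (E m).Nonempty) ∧
      (∀ m, ∀ i ∈ E m, ∀ j ∈ E (m + 1), i < j) ∧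
      (∀ m, (∑ i ∈ E m, α i • x i) ≠ 0) ∧
      ∃ C : ℕ → ℝ,
        (∀ k n, k ≤ n → ∀ a : ℕ → ℝ,
          ‖∑ m ∈ Finset.range k, a m • (∑ i ∈ E m, α i • x i)‖ ≤
            C k * ‖∑ m ∈ Finset.range n, a m • (∑ i ∈ E m, α i • x i)‖) ∧
        Tendsto C atTop (𝓝 1) := by
  obtain ⟨N, hN, α, hblock⟩ := (linearIndependent_of_norm_sum_range_le hnz hbasic
    ).exists_blocks_norm_sum_range_le (ε := fun m => 2⁻¹ ^ m) fun m => by positivity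
  refine ⟨fun m => Ico (N m) (N (m + 1)), α, fun m => nonempty_Ico.2 (hN (lt_add_one m)),
    fun m i hi j hj => (mem_Ico.1 hi).2.trans_le (mem_Ico.1 hj).1, fun m => (hblock m).1,
    fun k => exp (2⁻¹ ^ k / (1 - 2⁻¹)), fun k n hkn a => ?_, ?_⟩
  · calc _ ≤ exp (∑ j ∈ Ico k n, (2⁻¹ : ℝ) ^ j) * _ :=
          le_exp_sum_Ico_mul_of_le_exp_mul (fun m => (hblock m).2 a) hkn
      _ ≤ exp (2⁻¹ ^ k / (1 - 2⁻¹)) * _ := by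
          gcongr
          exact geom_sum_Ico_le_of_lt_one (by norm_num) (by norm_num)
  · simpa using ((tendsto_pow_atTop_nhds_zero_of_lt_one (r := (2⁻¹ : ℝ)) (by norm_num)
      (by norm_num)).div_const _).rexp

/-- Every basic sequence in a Banach space admits an asymptotically
monotone block basis: blocks `z_m = Σ_{i ∈ E m} α i • x i` over successive finite sets,
whose partial-sum projection constants `C k` tend to `1`. -/
theorem basic_sequence_has_asymptotically_monotone_block_basis
    {X : Type*} [NormedAddCommGroup X] [NormedSpace ℝ X] [CompleteSpace X]
    (x : ℕ → X) (hnz : ∀ i, x i ≠ 0) (K : ℝ)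
    (hbasic : ∀ k n, k ≤ n → ∀ a : ℕ → ℝ,
      ‖∑ i ∈ Finset.range k, a i • x i‖ ≤ K * ‖∑ i ∈ Finset.range n, a i • x i‖) :
    ∃ (E : ℕ → Finset ℕ) (α : ℕ → ℝ),
      (∀ m, (E m).Nonempty) ∧
      (∀ m, ∀ i ∈ E m, ∀ j ∈ E (m + 1), i < j) ∧
      (∀ m, (∑ i ∈ E m, α i • x i) ≠ 0) ∧
      ∃ C : ℕ → ℝ,
        (∀ k n, k ≤ n → ∀ a : ℕ → ℝ,
          ‖∑ m ∈ Finset.range k, a m • (∑ i ∈ E m, α i • x i)‖ ≤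
            C k * ‖∑ m ∈ Finset.range n, a m • (∑ i ∈ E m, α i • x i)‖) ∧
        Tendsto C atTop (𝓝 1) :=
  basic_sequence_has_asymptotically_monotone_block_basis_general x hnz K hbasic
end

section
/- If a Banach space X admits, for a given ε ∈ (0,1), a (1+ε)-biorthogonal system, then X admits a (1+ε)²-equivalent renorming whose unit sphere contains an infinite symmetrically 2-separated set; consequently the symmetric Kottman constant of the renormed space equals 2. -/
/-!
For `i ≠ j` and `|s| ≤ 1`, Hahn–Banach extends `f i + s • f j`, which has norm at most `1 + ε`
on the span of the `x n`, to a functional on `X` of the same norm bound. The new norm is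
`max (‖z‖ / (1 + ε)) (sup |g z|)` over all these extensions `g`. Biorthogonality gives
`|g (x n)| ≤ 1`, so every `x n` has new norm `1`, while the extension of `f n ± f m` takes the
value `2` at `x n ± x m`. Subadditivity caps the symmetric Kottman constant at `2`.
-/

open scoped NNReal

section Kottman

variable {X : Type*} [AddGroup X] {N : X → ℝ}

theorem symKottmanWith_le_two (hN : ∀ a b, N (a + b) ≤ N a + N b) : symKottmanWith N ≤ 2 :=
  Real.sSup_le (fun _ ⟨_, u, hu, hsep⟩ => by
    linarith [(hsep 0 1 zero_ne_one).1, hN (u 0) (u 1), hu 0, hu 1]) zero_le_two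

theorem two_le_symKottmanWith (hN : ∀ a b, N (a + b) ≤ N a + N b) {u : ℕ → X}
    (hu : ∀ n, N (u n) ≤ 1) (hsep : ∀ n m, n ≠ m → 2 ≤ N (u n + u m) ∧ 2 ≤ N (u n - u m)) :
    2 ≤ symKottmanWith N := by
  refine le_csSup ⟨2, fun σ ⟨_, v, hv, hvsep⟩ => ?_⟩ ⟨two_pos, u, hu, hsep⟩
  linarith [(hvsep 0 1 zero_ne_one).1, hN (v 0) (v 1), hv 0, hv 1]

end Kottman

section Extension

variable {E : Type*} [SeminormedAddCommGroup E] [NormedSpace ℝ E]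

theorem Submodule.exists_dual_extension_of_abs_le (p : Submodule ℝ E) (f : p →ₗ[ℝ] ℝ)
    {C : ℝ} (hC : 0 ≤ C) (hf : ∀ y, |f y| ≤ C * ‖y‖) :
    ∃ g : StrongDual ℝ E, (∀ y : p, g y = f y) ∧ ∀ z, |g z| ≤ C * ‖z‖ := by
  obtain ⟨g, hgf, hg⟩ := exists_extension_norm_eq p (f.mkContinuous C hf)
  refine ⟨g, hgf, fun z => ?_⟩
  calc |g z| ≤ ‖g‖ * ‖z‖ := g.le_opNorm z
    _ ≤ C * ‖z‖ := by rw [hg]; gcongr; exact f.mkContinuous_norm_le hC hf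

theorem Submodule.exists_dual_extension_of_abs_le_on {Y : Submodule ℝ E} (V : Submodule ℝ Y)
    (c : Y →ₗ[ℝ] ℝ) {C : ℝ} (hC : 0 ≤ C) (hc : ∀ y ∈ V, |c y| ≤ C * ‖y‖) :
    ∃ g : StrongDual ℝ E, (∀ y ∈ V, g y = c y) ∧ ∀ z, |g z| ≤ C * ‖z‖ := by
  obtain ⟨g₁, hg₁c, hg₁⟩ :=
    V.exists_dual_extension_of_abs_le (c ∘ₗ V.subtype) hC fun y => hc y y.2
  obtain ⟨g, hgg₁, hg⟩ := Y.exists_dual_extension_of_abs_le (g₁ : Y →ₗ[ℝ] ℝ) hC hg₁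
  exact ⟨g, fun y hy => (hgg₁ y).trans (hg₁c ⟨y, hy⟩), hg⟩

end Extension

section NormingFamily

variable {X : Type*} [SeminormedAddCommGroup X] [NormedSpace ℝ X] {ι : Type*}

noncomputable def normSupDual (a : ℝ≥0) (G : ι → StrongDual ℝ X) : Seminorm ℝ X :=
  a • normSeminorm ℝ X ⊔ ⨆ p, (normSeminorm ℝ ℝ).comp (G p : X →ₗ[ℝ] ℝ)

variable {a : ℝ≥0} {G : ι → StrongDual ℝ X} {C : ℝ}

theorem normSupDual_apply (hG : ∀ p z, |G p z| ≤ C * ‖z‖) (z : X) :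
    normSupDual a G z = max (a * ‖z‖) (⨆ p, |G p z|) := by
  have hbdd : BddAbove (Set.range fun p => (normSeminorm ℝ ℝ).comp (G p : X →ₗ[ℝ] ℝ)) :=
    Seminorm.bddAbove_range_iff.2 fun z => ⟨C * ‖z‖, by rintro _ ⟨p, rfl⟩; exact hG p z⟩
  simp [normSupDual, Seminorm.sup_apply, Seminorm.iSup_apply hbdd, NNReal.smul_def]

theorem mul_norm_le_normSupDual (hG : ∀ p z, |G p z| ≤ C * ‖z‖) (z : X) :
    a * ‖z‖ ≤ normSupDual a G z :=
  (normSupDual_apply hG z).symm ▸ le_max_left _ _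

theorem abs_apply_le_normSupDual (hG : ∀ p z, |G p z| ≤ C * ‖z‖) (p : ι) (z : X) :
    |G p z| ≤ normSupDual a G z :=
  (normSupDual_apply hG z).symm ▸ (le_ciSup ⟨C * ‖z‖, by rintro _ ⟨q, rfl⟩; exact hG q z⟩ p).trans
    (le_max_right _ _)

theorem normSupDual_le (hG : ∀ p z, |G p z| ≤ C * ‖z‖) {z : X} {r : ℝ} (hz : a * ‖z‖ ≤ r)
    (hGz : ∀ p, |G p z| ≤ r) : normSupDual a G z ≤ r := by
  rw [normSupDual_apply hG]
  exact max_le hz (Real.iSup_le hGz ((by positivity : (0 : ℝ) ≤ a * ‖z‖).trans hz))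

theorem normSupDual_eq_one (hG : ∀ p z, |G p z| ≤ C * ‖z‖) {u : X} (hu : a * ‖u‖ ≤ 1)
    (hGu : ∀ p, |G p u| ≤ 1) {p : ι} (hp : G p u = 1) : normSupDual a G u = 1 :=
  le_antisymm (normSupDual_le hG hu hGu) (by simpa [hp] using abs_apply_le_normSupDual hG p u)

theorem two_le_normSupDual_add (hG : ∀ p z, |G p z| ≤ C * ‖z‖) {u v : X} {p : ι}
    (hu : G p u = 1) (hv : G p v = 1) : 2 ≤ normSupDual a G (u + v) := by
  simpa [hu, hv, one_add_one_eq_two] using abs_apply_le_normSupDual (a := a) hG p (u + v)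

theorem two_le_normSupDual_sub (hG : ∀ p z, |G p z| ≤ C * ‖z‖) {u v : X} {p : ι}
    (hu : G p u = 1) (hv : G p v = -1) : 2 ≤ normSupDual a G (u - v) := by
  simpa [hu, hv, one_add_one_eq_two] using abs_apply_le_normSupDual (a := a) hG p (u - v)

end NormingFamily

section Biorthogonal

variable {X : Type*} [NormedAddCommGroup X] [NormedSpace ℝ X] {Y : Submodule ℝ X}
  {x : ℕ → Y} {f : ℕ → Y →L[ℝ] ℝ} {C : ℝ}

theorem exists_dual_extension_add_smul (hC : 0 ≤ C) {i j : ℕ}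
    (hf : ∀ y ∈ Submodule.span ℝ (Set.range x), |f i y| + |f j y| ≤ C * ‖y‖)
    {s : ℝ} (hs : |s| ≤ 1) :
    ∃ g : StrongDual ℝ X, (∀ n, g (x n) = f i (x n) + s * f j (x n)) ∧
      ∀ z, |g z| ≤ C * ‖z‖ := by
  obtain ⟨g, hgc, hg⟩ := Submodule.exists_dual_extension_of_abs_le_on
    (Submodule.span ℝ (Set.range x)) ((f i + s • f j : Y →L[ℝ] ℝ) : Y →ₗ[ℝ] ℝ) hC fun y hy => by
      calc |f i y + s * f j y| ≤ |f i y| + |s| * |f j y| := by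
            simpa only [abs_mul] using abs_add_le (f i y) (s * f j y)
        _ ≤ |f i y| + |f j y| := by gcongr; exact mul_le_of_le_one_left (abs_nonneg _) hs
        _ ≤ C * ‖y‖ := hf y hy
  exact ⟨g, fun n => hgc _ (Submodule.subset_span ⟨n, rfl⟩), hg⟩

theorem exists_norming_family_of_biorthogonal (hC : 0 ≤ C)
    (hbi : ∀ i j, f i (x j) = if i = j then 1 else 0)
    (hf : ∀ i j, i ≠ j → ∀ y ∈ Submodule.span ℝ (Set.range x), |f i y| + |f j y| ≤ C * ‖y‖) :
    ∃ (ι : Type) (G : ι → StrongDual ℝ X), (∀ p z, |G p z| ≤ C * ‖z‖) ∧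
      (∀ p n, |G p (x n)| ≤ 1) ∧
      ∀ n m, n ≠ m → ∀ s : ℝ, |s| ≤ 1 → ∃ p, G p (x n) = 1 ∧ G p (x m) = s := by
  choose G hGx hG using fun q : {q : ℕ × ℕ × ℝ // q.1 ≠ q.2.1 ∧ |q.2.2| ≤ 1} =>
    exists_dual_extension_add_smul hC (hf _ _ q.2.1) q.2.2
  refine ⟨_, G, hG, fun ⟨⟨i, j, s⟩, hij, hs⟩ n => ?_, fun n m hnm s hs =>
    ⟨⟨(n, m, s), hnm, hs⟩, by simp [hGx, hbi, hnm.symm], by simp [hGx, hbi, hnm]⟩⟩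
  rw [hGx, hbi, hbi]
  split_ifs with hi hj hj
  · exact absurd (hi.trans hj.symm) hij
  all_goals simp [hs]

end Biorthogonal

theorem one_add_eps_biorthogonal_renorming_symKottman_two_general
    {X : Type*} [NormedAddCommGroup X] [NormedSpace ℝ X]
    (ε : ℝ) (hε : ε ∈ Set.Ioo (0 : ℝ) 1)
    (Y : Submodule ℝ X) (x : ℕ → Y) (f : ℕ → Y →L[ℝ] ℝ)
    (hbi : ∀ i j, f i (x j) = if i = j then 1 else 0)
    (hx : ∀ n, ‖(x n : X)‖ ≤ 1 + ε)
    (hf : ∀ i j, i ≠ j →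
      ∀ y ∈ closure ((Submodule.span ℝ (Set.range x) : Submodule ℝ Y) : Set Y),
        |f i y| + |f j y| ≤ (1 + ε) * ‖y‖) :
    ∃ N : Seminorm ℝ X,
      (∀ z : X, N z ≤ (1 + ε) ^ 2 * ‖z‖ ∧ ‖z‖ ≤ (1 + ε) ^ 2 * N z) ∧
      (∃ u : ℕ → X, Function.Injective u ∧ (∀ n, N (u n) = 1) ∧
        ∀ n m, n ≠ m → 2 ≤ N (u n + u m) ∧ 2 ≤ N (u n - u m)) ∧
      symKottmanWith (fun z : X => N z) = 2 := by
  have hC : 1 ≤ 1 + ε := by linarith [hε.1]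
  obtain ⟨ι, G, hG, hGx, hGsep⟩ := exists_norming_family_of_biorthogonal (by linarith) hbi
    fun i j hij y hy => hf i j hij y (subset_closure hy)
  obtain ⟨a, ha⟩ : ∃ a : ℝ≥0, (a : ℝ) = (1 + ε)⁻¹ := ⟨⟨_, by positivity⟩, rfl⟩
  set N := normSupDual a G
  have hN1 : ∀ n, N (x n) = 1 := fun n =>
    have ⟨_, hp, _⟩ := hGsep n (n + 1) n.succ_ne_self.symm 1 (by simp)
    normSupDual_eq_one hG (ha ▸ (inv_mul_le_one₀ (by positivity)).2 (hx n)) (hGx · n) hp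
  have hsep : ∀ n m, n ≠ m → 2 ≤ N (x n + x m) ∧ 2 ≤ N (x n - x m) := fun n m hnm =>
    have ⟨_, hp₁, hp₂⟩ := hGsep n m hnm 1 (by simp)
    have ⟨_, hq₁, hq₂⟩ := hGsep n m hnm (-1) (by simp)
    ⟨two_le_normSupDual_add hG hp₁ hp₂, two_le_normSupDual_sub hG hq₁ hq₂⟩
  refine ⟨N, fun z => ⟨?_, ?_⟩, ⟨fun n => x n, fun n m h => ?_, hN1, hsep⟩,
    le_antisymm (symKottmanWith_le_two (map_add_le_add N))
      (two_le_symKottmanWith (map_add_le_add N) (fun n => (hN1 n).le) hsep)⟩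
  · calc N z ≤ (1 + ε) * ‖z‖ :=
          normSupDual_le hG (by rw [ha]; gcongr; exact (inv_le_one_of_one_le₀ hC).trans hC) (hG · z)
      _ ≤ (1 + ε) ^ 2 * ‖z‖ := by gcongr; exact le_self_pow₀ hC two_ne_zero
  · calc ‖z‖ ≤ (1 + ε) * N z :=
          (inv_mul_le_iff₀ (by positivity)).1 (ha ▸ mul_norm_le_normSupDual hG z)
      _ ≤ (1 + ε) ^ 2 * N z := by gcongr; exact le_self_pow₀ hC two_ne_zero
  · by_contra hnm
    exact absurd (hsep n m hnm).2 (by norm_num [h])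

/-- If `X` admits a `(1+ε)`-biorthogonal system (a biorthogonal
system `{x_n; f_n}` on a subspace `Y` with `‖x_n‖ ≤ 1+ε` and
`|f_i y| + |f_j y| ≤ (1+ε)‖y‖` for `i ≠ j` on the closed span of the `x_n`), then `X`
admits a `(1+ε)²`-equivalent renorming whose unit sphere contains an infinite
symmetrically 2-separated set; consequently the symmetric Kottman constant of the
renormed space equals `2`. -/
theorem one_add_eps_biorthogonal_renorming_symKottman_two
    {X : Type*} [NormedAddCommGroup X] [NormedSpace ℝ X] [CompleteSpace X]
    (ε : ℝ) (hε : ε ∈ Set.Ioo (0 : ℝ) 1)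
    (Y : Submodule ℝ X) (x : ℕ → Y) (f : ℕ → Y →L[ℝ] ℝ)
    (hbi : ∀ i j, f i (x j) = if i = j then 1 else 0)
    (hx : ∀ n, ‖(x n : X)‖ ≤ 1 + ε)
    (hf : ∀ i j, i ≠ j →
      ∀ y ∈ closure ((Submodule.span ℝ (Set.range x) : Submodule ℝ Y) : Set Y),
        |f i y| + |f j y| ≤ (1 + ε) * ‖y‖) :
    ∃ N : Seminorm ℝ X,
      (∀ z : X, N z ≤ (1 + ε) ^ 2 * ‖z‖ ∧ ‖z‖ ≤ (1 + ε) ^ 2 * N z) ∧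
      (∃ u : ℕ → X, Function.Injective u ∧ (∀ n, N (u n) = 1) ∧
        ∀ n m, n ≠ m → 2 ≤ N (u n + u m) ∧ 2 ≤ N (u n - u m)) ∧
      symKottmanWith (fun z : X => N z) = 2 :=
  one_add_eps_biorthogonal_renorming_symKottman_two_general ε hε Y x f hbi hx hf
end
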